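/- arXiv:1002.0519 — 8 statements merged into one kernel-verified Lean document; each statement's English description precedes it below -/
import Mathlib

section
/- Let Γ be a full-rank lattice in a finite-dimensional real inner product space E, let x ∈ E, and let R be a surjective linear isometry of E. Then R is a coincidence isometry of the shifted lattice x+Γ if and only if R is a coincidence isometry of Γ and Rx − x ∈ Γ + RΓ (i.e., Rx − x = t + Rs for some t, s ∈ Γ). -/
open Pointwise

variable {E : Type*} [NormedAddCommGroup E] [InnerProductSpace ℝ E] [FiniteDimensional ℝ E]

/-- The image `RΓ` of an additive subgroup `Γ` under a surjective linear isometry `R`. -/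
noncomputable def latMap (R : E ≃ₗᵢ[ℝ] E) (Γ : AddSubgroup E) : AddSubgroup E :=
  Γ.map R.toLinearEquiv.toLinearMap.toAddMonoidHom

/-- `R` is a coincidence isometry of `Γ`: the ordinary CSL `Γ ∩ RΓ` has finite index in `Γ`. -/
noncomputable def IsCoincidenceIsometry (R : E ≃ₗᵢ[ℝ] E) (Γ : AddSubgroup E) : Prop :=
  (Γ ⊓ latMap R Γ).relIndex Γ ≠ 0

/-- `R` is a coincidence isometry of the shifted lattice `x + Γ`: the intersection
`(x+Γ) ∩ R(x+Γ)` is a coset `c + Λ` of some finite-index additive subgroup `Λ` of `Γ`,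
with `c ∈ x + Γ`. -/
noncomputable def IsShiftedCoincidenceIsometry (R : E ≃ₗᵢ[ℝ] E) (x : E) (Γ : AddSubgroup E) : Prop :=
  ∃ c ∈ x +ᵥ (Γ : Set E), ∃ Λ : AddSubgroup E, Λ ≤ Γ ∧ Λ.relIndex Γ ≠ 0 ∧
    (x +ᵥ (Γ : Set E)) ∩ (⇑R '' (x +ᵥ (Γ : Set E))) = c +ᵥ (Λ : Set E)

/-!
Two cosets `a + A` and `b + B` of subgroups meet iff `b - a ∈ A + B`, and then their
intersection is a coset of `A ⊓ B`. Since `R(x + Γ) = Rx + RΓ`, the set `(x + Γ) ∩ R(x + Γ)` is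
nonempty exactly when `Rx - x ∈ Γ + RΓ`, and then it is a coset of the ordinary coincidence
subgroup `Γ ⊓ RΓ`; a coset determines its subgroup, so the finite-index conditions on both sides
coincide.
-/

section Cosets

variable {G : Type*} [AddGroup G]

lemma AddSubgroup.vadd_coe_eq_of_mem {A : AddSubgroup G} {a c : G}
    (hc : c ∈ a +ᵥ (A : Set G)) : c +ᵥ (A : Set G) = a +ᵥ (A : Set G) := by
  refine (leftAddCoset_eq_iff A).2 ?_
  simpa using A.neg_mem ((mem_leftAddCoset_iff a).1 hc)

lemma AddSubgroup.vadd_coe_inter_vadd_coe {A B : AddSubgroup G} {a b c : G}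
    (ha : c ∈ a +ᵥ (A : Set G)) (hb : c ∈ b +ᵥ (B : Set G)) :
    (a +ᵥ (A : Set G)) ∩ (b +ᵥ (B : Set G)) = c +ᵥ ((A ⊓ B : AddSubgroup G) : Set G) := by
  rw [AddSubgroup.coe_inf, Set.vadd_set_inter, vadd_coe_eq_of_mem ha, vadd_coe_eq_of_mem hb]

lemma AddSubgroup.eq_of_vadd_coe_eq {A B : AddSubgroup G} {c : G}
    (h : c +ᵥ (A : Set G) = c +ᵥ (B : Set G)) : A = B :=
  SetLike.coe_injective (Set.image_injective.2 (AddAction.injective c) h)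

end Cosets

lemma AddSubgroup.vadd_coe_inter_vadd_coe_nonempty_iff {G : Type*} [AddCommGroup G]
    (A B : AddSubgroup G) (a b : G) :
    ((a +ᵥ (A : Set G)) ∩ (b +ᵥ (B : Set G))).Nonempty ↔ ∃ t ∈ A, ∃ s ∈ B, b - a = t + s := by
  constructor
  · rintro ⟨c, hca, hcb⟩
    refine ⟨-a + c, (mem_leftAddCoset_iff a).1 hca,
      -(-b + c), B.neg_mem ((mem_leftAddCoset_iff b).1 hcb), ?_⟩
    abel
  · rintro ⟨t, ht, s, hs, hst⟩
    refine ⟨a + t, (mem_leftAddCoset_iff a).2 (by simpa using ht), (mem_leftAddCoset_iff b).2 ?_⟩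
    have hb : b = a + (t + s) := by rw [← hst]; abel
    rw [hb]
    simpa [add_assoc] using B.neg_mem hs

set_option linter.unusedSectionVars false

lemma mem_latMap {R : E ≃ₗᵢ[ℝ] E} {Γ : AddSubgroup E} {y : E} :
    y ∈ latMap R Γ ↔ ∃ g ∈ Γ, R g = y := by
  simp [latMap, AddSubgroup.mem_map]

section ShiftedLattice

variable (R : E ≃ₗᵢ[ℝ] E) (Γ : AddSubgroup E) (x : E)

lemma image_vadd_coe_eq_vadd_latMap :
    ⇑R '' (x +ᵥ (Γ : Set E)) = R x +ᵥ (latMap R Γ : Set E) := by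
  rw [Set.image_vadd_distrib]
  rfl

lemma vadd_coe_inter_image_nonempty_iff :
    ((x +ᵥ (Γ : Set E)) ∩ ⇑R '' (x +ᵥ (Γ : Set E))).Nonempty ↔
      ∃ t ∈ Γ, ∃ s ∈ Γ, R x - x = t + R s := by
  simp [image_vadd_coe_eq_vadd_latMap, AddSubgroup.vadd_coe_inter_vadd_coe_nonempty_iff,
    mem_latMap]

lemma vadd_coe_inter_image_eq_vadd_inf_latMap {c : E}
    (hc : c ∈ (x +ᵥ (Γ : Set E)) ∩ ⇑R '' (x +ᵥ (Γ : Set E))) :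
    (x +ᵥ (Γ : Set E)) ∩ ⇑R '' (x +ᵥ (Γ : Set E)) =
      c +ᵥ ((Γ ⊓ latMap R Γ : AddSubgroup E) : Set E) := by
  rw [image_vadd_coe_eq_vadd_latMap] at hc ⊢
  exact AddSubgroup.vadd_coe_inter_vadd_coe hc.1 hc.2

end ShiftedLattice

theorem shifted_coincidence_iff_general (Γ : AddSubgroup E) (x : E) (R : E ≃ₗᵢ[ℝ] E) :
    IsShiftedCoincidenceIsometry R x Γ ↔
      (IsCoincidenceIsometry R Γ ∧ ∃ t ∈ Γ, ∃ s ∈ Γ, R x - x = t + R s) := by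
  rw [← vadd_coe_inter_image_nonempty_iff]
  constructor
  · rintro ⟨c, -, Λ, -, hΛ, hΛc⟩
    have hc : c ∈ (x +ᵥ (Γ : Set E)) ∩ ⇑R '' (x +ᵥ (Γ : Set E)) :=
      hΛc ▸ ⟨0, Λ.zero_mem, add_zero c⟩
    have hΛ_eq : Λ = Γ ⊓ latMap R Γ := AddSubgroup.eq_of_vadd_coe_eq
      (hΛc.symm.trans (vadd_coe_inter_image_eq_vadd_inf_latMap R Γ x hc))
    exact ⟨by rwa [IsCoincidenceIsometry, ← hΛ_eq], c, hc⟩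
  · rintro ⟨hR, c, hc⟩
    exact ⟨c, hc.1, Γ ⊓ latMap R Γ, inf_le_left, hR,
      vadd_coe_inter_image_eq_vadd_inf_latMap R Γ x hc⟩

theorem shifted_coincidence_iff (Γ : AddSubgroup E) (hdisc : DiscreteTopology Γ)
    (hspan : Submodule.span ℝ (Γ : Set E) = ⊤) (x : E) (R : E ≃ₗᵢ[ℝ] E) :
    IsShiftedCoincidenceIsometry R x Γ ↔
      (IsCoincidenceIsometry R Γ ∧ ∃ t ∈ Γ, ∃ s ∈ Γ, R x - x = t + R s) :=
  shifted_coincidence_iff_general Γ x R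
end

section
/- Let Γ be a full-rank lattice in a finite-dimensional real inner product space E, let x ∈ E, and let R be a coincidence isometry of the shifted lattice x+Γ. If t, s ∈ Γ satisfy Rx − x = t + Rs, then (x+Γ) ∩ R(x+Γ) = x + t + (Γ ∩ RΓ) (equality of subsets of E). -/
open Pointwise

variable {E : Type*} [NormedAddCommGroup E] [InnerProductSpace ℝ E] [FiniteDimensional ℝ E]

theorem AddMonoidHom.image_vadd_coe_addSubgroup {G H : Type*} [AddGroup G] [AddGroup H]
    (f : G →+ H) (x : G) (Γ : AddSubgroup G) :
    f '' (x +ᵥ (Γ : Set G)) = f x +ᵥ (Γ.map f : Set H) := by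
  rw [Set.image_vadd_distrib, AddSubgroup.coe_map]

/-- The decomposition `f x - x = t + f s` exhibits `x + t` as a common representative of the
cosets `x + Γ` and `f(x + Γ) = f x + fΓ`. -/
theorem AddMonoidHom.vadd_inter_image_vadd_eq {G : Type*} [AddCommGroup G] (Γ : AddSubgroup G)
    (f : G →+ G) {x t s : G} (ht : t ∈ Γ) (hs : s ∈ Γ) (hts : f x - x = t + f s) :
    (x +ᵥ (Γ : Set G)) ∩ f '' (x +ᵥ (Γ : Set G)) =
      (x + t) +ᵥ ((Γ ⊓ Γ.map f : AddSubgroup G) : Set G) := by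
  have hΓ : x +ᵥ (Γ : Set G) = (x + t) +ᵥ (Γ : Set G) :=
    (leftAddCoset_eq_iff Γ).2 (by simpa using ht)
  have hfΓ : f x +ᵥ (Γ.map f : Set G) = (x + t) +ᵥ (Γ.map f : Set G) := by
    have hdiff : -f x + (x + t) = f (-s) := by
      rw [sub_eq_iff_eq_add.mp hts, map_neg]
      abel
    exact (leftAddCoset_eq_iff _).2 (hdiff ▸ AddSubgroup.mem_map_of_mem f (neg_mem hs))
  rw [f.image_vadd_coe_addSubgroup, AddSubgroup.coe_inf, Set.vadd_set_inter, hΓ, hfΓ]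

theorem shifted_CSL_eq_coset_general (Γ : AddSubgroup E) (x : E) (R : E ≃ₗᵢ[ℝ] E) (t s : E)
    (ht : t ∈ Γ) (hs : s ∈ Γ) (hts : R x - x = t + R s) :
    (x +ᵥ (Γ : Set E)) ∩ (⇑R '' (x +ᵥ (Γ : Set E))) =
      (x + t) +ᵥ ((Γ ⊓ latMap R Γ : AddSubgroup E) : Set E) :=
  R.toLinearEquiv.toLinearMap.toAddMonoidHom.vadd_inter_image_vadd_eq Γ ht hs hts

theorem shifted_CSL_eq_coset (Γ : AddSubgroup E) (hdisc : DiscreteTopology Γ)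
    (hspan : Submodule.span ℝ (Γ : Set E) = ⊤) (x : E) (R : E ≃ₗᵢ[ℝ] E)
    (hR : IsShiftedCoincidenceIsometry R x Γ) (t s : E) (ht : t ∈ Γ) (hs : s ∈ Γ)
    (hts : R x - x = t + R s) :
    (x +ᵥ (Γ : Set E)) ∩ (⇑R '' (x +ᵥ (Γ : Set E))) =
      (x + t) +ᵥ ((Γ ⊓ latMap R Γ : AddSubgroup E) : Set E) :=
  shifted_CSL_eq_coset_general Γ x R t s ht hs hts
end

section
/- Let Γ be a full-rank lattice in a finite-dimensional real inner product space E, let x ∈ E, and let R ∈ OC(x+Γ). Then there exists t ∈ Γ such that (x+Γ) ∩ R(x+Γ) = x + t + (Γ ∩ RΓ); in particular the coincidence site lattice of the shifted lattice x+Γ is a coset of the ordinary coincidence site lattice Γ(R) = Γ ∩ RΓ, which has finite index in Γ (so shifting the lattice produces no new coincidence indices). -/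
open Pointwise

variable {E : Type*} [NormedAddCommGroup E] [InnerProductSpace ℝ E] [FiniteDimensional ℝ E]

/-! The intersection of two cosets `a + A` and `b + B` of subgroups is either empty or a coset
of `A ⊓ B` around any of its points. Writing `R(x+Γ) = Rx + RΓ`, the hypothesis that the
intersection is a coset `c + Λ` makes it nonempty, hence equal to `c + (Γ ∩ RΓ)`; comparing the
two descriptions forces `Λ = Γ ∩ RΓ`, which therefore has finite index. -/

lemma leftAddCoset_eq_of_mem {G : Type*} [AddGroup G] {A : AddSubgroup G} {a c : G}
    (hc : c ∈ a +ᵥ (A : Set G)) : a +ᵥ (A : Set G) = c +ᵥ (A : Set G) :=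
  (leftAddCoset_eq_iff A).2 ((mem_leftAddCoset_iff a).1 hc)

lemma leftAddCoset_inter_leftAddCoset_eq_of_mem {G : Type*} [AddGroup G] {A B : AddSubgroup G}
    {a b c : G} (hca : c ∈ a +ᵥ (A : Set G)) (hcb : c ∈ b +ᵥ (B : Set G)) :
    (a +ᵥ (A : Set G)) ∩ (b +ᵥ (B : Set G)) = c +ᵥ ((A ⊓ B : AddSubgroup G) : Set G) := by
  rw [leftAddCoset_eq_of_mem hca, leftAddCoset_eq_of_mem hcb, AddSubgroup.coe_inf,
    Set.vadd_set_inter]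

lemma AddSubgroup.eq_of_leftAddCoset_eq {G : Type*} [AddGroup G] {A B : AddSubgroup G} {c : G}
    (h : c +ᵥ (A : Set G) = c +ᵥ (B : Set G)) : A = B :=
  SetLike.coe_injective ((vadd_left_cancel_iff c).1 h)

lemma image_vadd_eq_vadd_latMap {E : Type*} [NormedAddCommGroup E] [InnerProductSpace ℝ E]
    (R : E ≃ₗᵢ[ℝ] E) (x : E) (Γ : AddSubgroup E) :
    ⇑R '' (x +ᵥ (Γ : Set E)) = R x +ᵥ (latMap R Γ : Set E) := by
  rw [Set.image_vadd_distrib R, latMap, AddSubgroup.coe_map]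
  rfl

theorem shifted_CSL_is_coset_of_CSL_general (Γ : AddSubgroup E) (x : E) (R : E ≃ₗᵢ[ℝ] E)
    (hR : IsShiftedCoincidenceIsometry R x Γ) :
    (∃ t ∈ Γ, (x +ᵥ (Γ : Set E)) ∩ (⇑R '' (x +ᵥ (Γ : Set E))) =
        (x + t) +ᵥ ((Γ ⊓ latMap R Γ : AddSubgroup E) : Set E)) ∧
      (Γ ⊓ latMap R Γ).relIndex Γ ≠ 0 := by
  obtain ⟨c, ⟨t, ht, rfl⟩, Λ, -, hΛ, hcoset⟩ := hR
  have hmem : x +ᵥ t ∈ (x +ᵥ (Γ : Set E)) ∩ (⇑R '' (x +ᵥ (Γ : Set E))) := by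
    rw [hcoset]
    exact ⟨0, Λ.zero_mem, add_zero _⟩
  rw [image_vadd_eq_vadd_latMap] at hmem hcoset ⊢
  have hCSL := leftAddCoset_inter_leftAddCoset_eq_of_mem hmem.1 hmem.2
  refine ⟨⟨t, ht, hCSL⟩, ?_⟩
  rwa [AddSubgroup.eq_of_leftAddCoset_eq (hCSL.symm.trans hcoset)]

theorem shifted_CSL_is_coset_of_CSL (Γ : AddSubgroup E) (hdisc : DiscreteTopology Γ)
    (hspan : Submodule.span ℝ (Γ : Set E) = ⊤) (x : E) (R : E ≃ₗᵢ[ℝ] E)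
    (hR : IsShiftedCoincidenceIsometry R x Γ) :
    (∃ t ∈ Γ, (x +ᵥ (Γ : Set E)) ∩ (⇑R '' (x +ᵥ (Γ : Set E))) =
        (x + t) +ᵥ ((Γ ⊓ latMap R Γ : AddSubgroup E) : Set E)) ∧
      (Γ ⊓ latMap R Γ).relIndex Γ ≠ 0 :=
  shifted_CSL_is_coset_of_CSL_general Γ x R hR
end

section
/- Let z be a nonzero Gaussian integer such that z and conj(z) are coprime in ℤ[i], and let ε ∈ {1, −1, i, −i}. Then, as subsets of ℂ, ℤ[i] + ε·(z/conj(z))·ℤ[i] = (1/conj(z))·ℤ[i]. -/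
open Pointwise Complex ComplexConjugate

/-- The square lattice `Γ = ℤ[i]`, i.e. the Gaussian integers viewed as an additive
subgroup of `ℂ`. -/
noncomputable def Zi : AddSubgroup ℂ :=
  AddMonoidHom.range (GaussianInt.toComplex.toAddMonoidHom)

/-- `f` is (the underlying map of) a surjective real-linear isometry of `ℂ`. -/
def IsLinIso (f : ℂ → ℂ) : Prop := ∃ R : ℂ ≃ₗᵢ[ℝ] ℂ, ⇑R = f

/-- `f` is a rotation of `ℂ`, i.e. multiplication by a complex number of modulus 1. -/
def IsRotation (f : ℂ → ℂ) : Prop := ∃ u : ℂ, ‖u‖ = 1 ∧ ∀ w, f w = u * w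

/-- `f` is a reflection of `ℂ`, i.e. `w ↦ u * conj w` for a complex number `u` of
modulus 1. -/
def IsReflection (f : ℂ → ℂ) : Prop := ∃ u : ℂ, ‖u‖ = 1 ∧ ∀ w, f w = u * conj w

/-- The shifted square lattice `x + Γ` as a subset of `ℂ`. -/
noncomputable def shiftedZi (x : ℂ) : Set ℂ := x +ᵥ (Zi : Set ℂ)

/-- `OC (x+Γ)`: the set of (maps of) surjective real-linear isometries `f` of `ℂ` such
that `(x+Γ) ∩ f(x+Γ)` is a coset `c + Λ`, with `c ∈ x+Γ` and `Λ` a finite-index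
additive subgroup of `Γ = ℤ[i]`. -/
noncomputable def OCs (x : ℂ) : Set (ℂ → ℂ) :=
  {f | IsLinIso f ∧ ∃ c ∈ shiftedZi x, ∃ Λ : AddSubgroup ℂ, Λ ≤ Zi ∧
    Λ.relIndex Zi ≠ 0 ∧ shiftedZi x ∩ (f '' shiftedZi x) = c +ᵥ (Λ : Set ℂ)}

/-- `SOC (x+Γ)`: the rotations among the coincidence isometries of `x + Γ`. -/
noncomputable def SOCs (x : ℂ) : Set (ℂ → ℂ) := {f ∈ OCs x | IsRotation f}

/-!
With `ε = u` for a Gaussian unit `u`, the left-hand side is `z̄⁻¹ • (z̄ ℤ[i] + u z ℤ[i])`, and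
`z̄ ℤ[i] + u z ℤ[i] = ℤ[i]` because `u z` and `z̄` are coprime: a Bézout relation writes every
Gaussian integer as a combination of them.
-/

section CoprimeRange

variable {R S : Type*} [CommRing R]

theorem RingHom.smul_range_add_smul_range_eq_range [CommRing S] (φ : R →+* S) {a b : R}
    (hab : IsCoprime a b) : φ a • Set.range φ + φ b • Set.range φ = Set.range φ := by
  apply Set.Subset.antisymm
  · rintro _ ⟨_, ⟨_, ⟨r, rfl⟩, rfl⟩, _, ⟨_, ⟨s, rfl⟩, rfl⟩, rfl⟩
    exact ⟨a * r + b * s, by simp⟩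
  · rintro _ ⟨t, rfl⟩
    obtain ⟨c, d, hcd⟩ := hab
    refine ⟨φ a * φ (c * t), ⟨_, ⟨_, rfl⟩, rfl⟩, φ b * φ (d * t), ⟨_, ⟨_, rfl⟩, rfl⟩, ?_⟩
    simp only [← map_mul, ← map_add]
    congr 1
    linear_combination t * hcd

theorem RingHom.range_add_div_smul_range_eq [Field S] (φ : R →+* S) {a b : R}
    (hab : IsCoprime a b) (hb : φ b ≠ 0) :
    Set.range φ + (φ a / φ b) • Set.range φ = (φ b)⁻¹ • Set.range φ := by
  conv_rhs => rw [← φ.smul_range_add_smul_range_eq_range hab.symm]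
  rw [smul_add, smul_smul, smul_smul, inv_mul_cancel₀ hb, one_smul, div_eq_inv_mul]

theorem GaussianInt.exists_isUnit_toComplex_eq {ε : ℂ} (hε : ε ∈ ({1, -1, I, -I} : Set ℂ)) :
    ∃ u : GaussianInt, IsUnit u ∧ (u : ℂ) = ε := by
  rcases hε with rfl | rfl | rfl | rfl
  · exact ⟨1, isUnit_one, by simp⟩
  · exact ⟨-1, isUnit_one.neg, by simp⟩
  · exact ⟨⟨0, 1⟩, IsUnit.of_mul_eq_one ⟨0, -1⟩ (by decide), by simp [toComplex_def']⟩
  · exact ⟨⟨0, -1⟩, IsUnit.of_mul_eq_one ⟨0, 1⟩ (by decide), by simp [toComplex_def']⟩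

theorem coe_Zi : (Zi : Set ℂ) = Set.range GaussianInt.toComplex := AddMonoidHom.coe_range _

theorem sum_lattice_rotated_lattice (z : GaussianInt) (hz : z ≠ 0)
    (hcop : IsCoprime z (star z)) (ε : ℂ) (hε : ε ∈ ({1, -1, I, -I} : Set ℂ)) :
    (Zi : Set ℂ) + (ε * ((z : ℂ) / conj (z : ℂ))) • (Zi : Set ℂ) =
      (1 / conj (z : ℂ)) • (Zi : Set ℂ) := by
  obtain ⟨u, hu, rfl⟩ := GaussianInt.exists_isUnit_toComplex_eq hε
  rw [coe_Zi, ← GaussianInt.toComplex_star, ← mul_div_assoc, ← GaussianInt.toComplex_mul, one_div]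
  refine GaussianInt.toComplex.range_add_div_smul_range_eq
    ((isCoprime_mul_unit_left_left hu _ _).mpr hcop) ?_
  rwa [Ne, GaussianInt.toComplex_eq_zero, star_eq_zero]
end CoprimeRange
end

section
/- Let x ∈ ℂ, let z ∈ ℤ[i] be such that z and conj(z) are coprime in ℤ[i], and let ε ∈ {1, −1, i, −i}. The rotation R(z,ε): w ↦ ε·(z/conj(z))·w belongs to SOC(x+Γ) if and only if (εz − conj(z))·x ∈ ℤ[i]. -/
open Pointwise Complex ComplexConjugate

/-!
Write `ε = η` for a Gaussian unit `η` and put `a = η z`, `b = conj z`, so the rotation is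
`w ↦ (a / b) w` with `a, b` coprime of equal modulus. For Gaussian integers `g, h`,
`x + g = (a / b) (x + h)` iff `(a - b) x = b g - a h`; so a nonempty intersection of `x + Γ`
with its image forces `(a - b) x ∈ Γ`. Conversely, if `(a - b) x = t ∈ Γ`, then `x + g` lies in
the intersection iff `a ∣ b g - t`, which by a Bézout identity `u a + v b = 1` means
`g ≡ v t (mod a)`: the intersection is the coset `x + v t + aΓ`, and `aΓ` has finite index in `Γ`.
-/

namespace Zsqrtd

def addEquivProd (d : ℤ) : ℤ√d ≃+ ℤ × ℤ where
  toFun z := (z.re, z.im)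
  invFun p := ⟨p.1, p.2⟩
  left_inv _ := rfl
  right_inv _ := rfl
  map_add' _ _ := rfl

instance (d : ℤ) : Module.Free ℤ (ℤ√d) :=
  .of_equiv (addEquivProd d).toIntLinearEquiv.symm

instance (d : ℤ) : Module.Finite ℤ (ℤ√d) :=
  .equiv (addEquivProd d).toIntLinearEquiv.symm

end Zsqrtd

theorem dvd_mul_sub_iff_of_mul_add_mul_eq_one {R : Type*} [CommRing R] {a b u v g t : R}
    (h : u * a + v * b = 1) : a ∣ b * g - t ↔ a ∣ g - v * t := by
  constructor
  · rintro ⟨k, hk⟩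
    exact ⟨u * g + v * k, by linear_combination -g * h + v * hk⟩
  · rintro ⟨k, hk⟩
    exact ⟨b * k - u * t, by linear_combination b * hk + t * h⟩

theorem div_mul_add_eq_add_iff {K : Type*} [Field K] {a b : K} (hb : b ≠ 0) (x g h : K) :
    a / b * (x + h) = x + g ↔ (a - b) * x = b * g - a * h := by
  rw [div_mul_eq_mul_div, div_eq_iff hb]
  constructor <;> intro H <;> linear_combination H

theorem isLinIso_of_isRotation {f : ℂ → ℂ} (hf : IsRotation f) : IsLinIso f := by
  obtain ⟨u, hu, hf⟩ := hf
  exact ⟨rotation ⟨u, mem_sphere_zero_iff_norm.2 hu⟩, funext fun w => (hf w).symm⟩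

theorem mem_Zi {w : ℂ} : w ∈ Zi ↔ ∃ g : GaussianInt, (g : ℂ) = w := Iff.rfl

theorem mem_shiftedZi {x w : ℂ} : w ∈ shiftedZi x ↔ ∃ g : GaussianInt, w = x + g := by
  simp only [shiftedZi, Set.mem_vadd_set, SetLike.mem_coe, mem_Zi, vadd_eq_add]
  constructor
  · rintro ⟨_, ⟨g, rfl⟩, rfl⟩
    exact ⟨g, rfl⟩
  · rintro ⟨g, rfl⟩
    exact ⟨g, ⟨g, rfl⟩, rfl⟩

noncomputable def mulZi (a : GaussianInt) : AddSubgroup ℂ :=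
  (Ideal.span {a}).toAddSubgroup.map GaussianInt.toComplex.toAddMonoidHom

theorem mem_mulZi {a : GaussianInt} {w : ℂ} : w ∈ mulZi a ↔ ∃ k : GaussianInt, w = a * k := by
  simp only [mulZi, AddSubgroup.mem_map, Submodule.mem_toAddSubgroup, Ideal.mem_span_singleton']
  constructor
  · rintro ⟨_, ⟨k, rfl⟩, rfl⟩
    exact ⟨k, by simp [mul_comm]⟩
  · rintro ⟨k, rfl⟩
    exact ⟨_, ⟨k, rfl⟩, by simp [mul_comm]⟩

theorem mulZi_le_Zi (a : GaussianInt) : mulZi a ≤ Zi :=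
  AddSubgroup.map_le_range _ _

theorem relIndex_mulZi_ne_zero {a : GaussianInt} (ha : a ≠ 0) : (mulZi a).relIndex Zi ≠ 0 := by
  have : Finite (GaussianInt ⧸ (Ideal.span {a}).toAddSubgroup) :=
    Ideal.finiteQuotientOfFreeOfNeBot _ (Ideal.span_singleton_eq_bot.not.2 ha)
  rw [mulZi, Zi, AddMonoidHom.range_eq_map, AddSubgroup.relIndex_map_map_of_injective _ _
    GaussianInt.toComplex_injective, AddSubgroup.relIndex_top_right]
  exact AddSubgroup.index_ne_zero_of_finite

theorem mem_shiftedZi_inter_image_mul_iff {a b : ℂ} (hb : b ≠ 0) {x w : ℂ} :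
    w ∈ shiftedZi x ∩ (fun w => a / b * w) '' shiftedZi x ↔
      ∃ g h : GaussianInt, w = x + g ∧ (a - b) * x = b * g - a * h := by
  simp only [Set.mem_inter_iff, Set.mem_image, mem_shiftedZi]
  constructor
  · rintro ⟨⟨g, rfl⟩, _, ⟨h, rfl⟩, hgh⟩
    exact ⟨g, h, rfl, (div_mul_add_eq_add_iff hb x g h).1 hgh⟩
  · rintro ⟨g, h, rfl, hgh⟩
    exact ⟨⟨g, rfl⟩, _, ⟨h, rfl⟩, (div_mul_add_eq_add_iff hb x g h).2 hgh⟩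

theorem shiftedZi_inter_image_mul_eq {a b u v t : GaussianInt} (hb : b ≠ 0)
    (huv : u * a + v * b = 1) {x : ℂ} (ht : ((a : ℂ) - b) * x = t) :
    shiftedZi x ∩ (fun w => a / b * w) '' shiftedZi x = (x + ↑(v * t)) +ᵥ (mulZi a : Set ℂ) := by
  have hbC : (b : ℂ) ≠ 0 := GaussianInt.toComplex_eq_zero.not.2 hb
  ext w
  simp only [mem_shiftedZi_inter_image_mul_iff hbC, ht, Set.mem_vadd_set, SetLike.mem_coe,
    mem_mulZi, vadd_eq_add]
  constructor
  · rintro ⟨g, h, rfl, hgh⟩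
    have hdvd : a ∣ b * g - t := ⟨h, GaussianInt.toComplex_injective <| by
      simp only [map_sub, map_mul]
      linear_combination -hgh⟩
    obtain ⟨k, hk⟩ := (dvd_mul_sub_iff_of_mul_add_mul_eq_one huv).1 hdvd
    refine ⟨_, ⟨k, rfl⟩, ?_⟩
    have := congrArg GaussianInt.toComplex hk
    simp only [map_sub, map_mul] at this ⊢
    linear_combination -this
  · rintro ⟨_, ⟨k, rfl⟩, rfl⟩
    have hdvd : a ∣ b * (v * t + a * k) - t :=
      (dvd_mul_sub_iff_of_mul_add_mul_eq_one huv).2 ⟨k, by ring⟩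
    obtain ⟨h, hh⟩ := hdvd
    refine ⟨v * t + a * k, h, by simp only [map_add, map_mul]; ring, ?_⟩
    have := congrArg GaussianInt.toComplex hh
    simp only [map_add, map_sub, map_mul] at this ⊢
    linear_combination -this

theorem div_mul_mem_SOCs_iff {a b : GaussianInt} (hab : IsCoprime a b)
    (hnorm : ‖(a : ℂ)‖ = ‖(b : ℂ)‖) (x : ℂ) :
    (fun w : ℂ => (a : ℂ) / b * w) ∈ SOCs x ↔ ((a : ℂ) - b) * x ∈ Zi := by
  have hb : b ≠ 0 := by
    rintro rfl
    rw [map_zero, norm_zero, norm_eq_zero, GaussianInt.toComplex_eq_zero] at hnorm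
    exact not_isCoprime_zero_zero (hnorm ▸ hab)
  have ha : a ≠ 0 := by
    rintro rfl
    rw [map_zero, norm_zero, eq_comm, norm_eq_zero, GaussianInt.toComplex_eq_zero] at hnorm
    exact hb hnorm
  have hbC : (b : ℂ) ≠ 0 := GaussianInt.toComplex_eq_zero.not.2 hb
  have hrot : IsRotation fun w : ℂ => (a : ℂ) / b * w :=
    ⟨a / b, by rw [norm_div, hnorm, div_self (norm_ne_zero_iff.2 hbC)], fun _ => rfl⟩
  constructor
  · rintro ⟨⟨-, c, -, Λ, -, -, hΛ⟩, -⟩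
    have hc : c ∈ shiftedZi x ∩ (fun w : ℂ => (a : ℂ) / b * w) '' shiftedZi x :=
      hΛ ▸ ⟨0, Λ.zero_mem, add_zero c⟩
    obtain ⟨g, h, -, hgh⟩ := (mem_shiftedZi_inter_image_mul_iff hbC).1 hc
    exact ⟨b * g - a * h, by simp [hgh]⟩
  · rintro ⟨t, ht⟩
    obtain ⟨u, v, huv⟩ := hab
    exact ⟨⟨isLinIso_of_isRotation hrot, _, mem_shiftedZi.2 ⟨v * t, rfl⟩, mulZi a, mulZi_le_Zi a,
      relIndex_mulZi_ne_zero ha, shiftedZi_inter_image_mul_eq hb huv ht.symm⟩, hrot⟩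

theorem exists_unit_toComplex_eq {ε : ℂ} (hε : ε ∈ ({1, -1, I, -I} : Set ℂ)) :
    ∃ η : GaussianIntˣ, ((η : GaussianInt) : ℂ) = ε := by
  rcases hε with rfl | rfl | rfl | rfl
  · exact ⟨1, map_one _⟩
  · exact ⟨-1, by simp⟩
  · exact ⟨⟨⟨0, 1⟩, ⟨0, -1⟩, by decide, by decide⟩, by simp [GaussianInt.toComplex_def']⟩
  · exact ⟨⟨⟨0, -1⟩, ⟨0, 1⟩, by decide, by decide⟩, by simp [GaussianInt.toComplex_def']⟩

theorem rotation_mem_SOC_iff (x : ℂ) (z : GaussianInt) (hcop : IsCoprime z (star z))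
    (ε : ℂ) (hε : ε ∈ ({1, -1, I, -I} : Set ℂ)) :
    (fun w => ε * ((z : ℂ) / conj (z : ℂ)) * w) ∈ SOCs x ↔
      (ε * (z : ℂ) - conj (z : ℂ)) * x ∈ Zi := by
  obtain ⟨η, hη⟩ := exists_unit_toComplex_eq hε
  have hε1 : ‖ε‖ = 1 := by rcases hε with rfl | rfl | rfl | rfl <;> simp
  have hcast : ε * (z : ℂ) = ↑(↑η * z) := by rw [map_mul, hη]
  have hmap : (fun w => ε * ((z : ℂ) / conj (z : ℂ)) * w) =
      fun w : ℂ => ((↑η * z : GaussianInt) : ℂ) / (star z : GaussianInt) * w := by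
    simp only [← hcast, mul_div_assoc, GaussianInt.toComplex_star]
  rw [hmap, hcast, ← GaussianInt.toComplex_star]
  refine div_mul_mem_SOCs_iff ((isCoprime_mul_unit_left_left η.isUnit _ _).2 hcop) ?_ x
  rw [← hcast, GaussianInt.toComplex_star, norm_mul, hε1, one_mul, RCLike.norm_conj]
end

section
/- Let x ∈ ℂ and suppose OC(x+Γ) contains a reflection T of the form w ↦ i^k·conj(w) for some k ∈ {0,1,2,3} (a reflection in the point group of Γ). Then OC(x+Γ) is a subgroup of OC(Γ), and OC(x+Γ) = SOC(x+Γ) ∪ {S ∘ T : S ∈ SOC(x+Γ)}. -/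
/-!
A rotation or reflection `f` with linear part `u` maps `x + Γ` onto `f x + uΓ`, so
`(x + Γ) ∩ f (x + Γ)` is either empty or a coset of `Γ ∩ uΓ`. Hence `f ∈ OC(x + Γ)` iff `u` lies
in `ℚ(i)` (this is finite index of `Γ ∩ uΓ`) and `x - f x ∈ Γ + uΓ`.

For rotations `u, v` the second condition passes to `uv`: writing `u = w₁ / z₁` and `v = w₂ / z₂`
with coprime Gaussian integers, the four products `z₁z₂, z₁w₂, w₁z₂, w₁w₂` carry
`y = x (1 - uv)` into `Γ + uvΓ`, and two Bézout steps give `y ∈ Γ + uvΓ`.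

If the point-group reflection `T w = t * conj w` lies in `OC(x + Γ)`, then `x - T x ∈ Γ`, and this
turns the condition for `S ∘ T` into the condition for the rotation `S`. So
`OC(x + Γ) = SOC(x + Γ) ∪ SOC(x + Γ) ∘ T`, and the group laws follow from `T ∘ T = id` and
`T ∘ R_v = R_{conj v} ∘ T`.
-/
open Pointwise Complex ComplexConjugate

open GaussianInt

lemma mul_mem_Zi {a b : ℂ} (ha : a ∈ Zi) (hb : b ∈ Zi) : a * b ∈ Zi :=
  toComplex.range.mul_mem ha hb

lemma one_mem_Zi : (1 : ℂ) ∈ Zi :=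
  toComplex.range.one_mem

lemma conj_mem_Zi {a : ℂ} (ha : a ∈ Zi) : conj a ∈ Zi := by
  obtain ⟨b, rfl⟩ := ha
  exact ⟨star b, toComplex_star b⟩

lemma I_pow_mem_Zi (k : ℕ) : I ^ k ∈ Zi :=
  toComplex.range.pow_mem ⟨⟨0, 1⟩, by simp [toComplex_def']⟩ k

section Cosets

variable {G : Type*} [AddCommGroup G] {A B Λ : AddSubgroup G} {p q c : G}

lemma vadd_coset_eq_of_mem (h : c ∈ p +ᵥ (A : Set G)) : p +ᵥ (A : Set G) = c +ᵥ (A : Set G) := by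
  rw [leftAddCoset_eq_iff]
  obtain ⟨a, ha, rfl⟩ := h
  simpa using ha

lemma vadd_inter_vadd_eq_of_mem (h : c ∈ (p +ᵥ (A : Set G)) ∩ (q +ᵥ (B : Set G))) :
    (p +ᵥ (A : Set G)) ∩ (q +ᵥ (B : Set G)) = c +ᵥ ((A ⊓ B : AddSubgroup G) : Set G) := by
  rw [vadd_coset_eq_of_mem h.1, vadd_coset_eq_of_mem h.2, AddSubgroup.coe_inf, Set.vadd_set_inter]

lemma vadd_inter_vadd_eq_vadd_iff :
    (p +ᵥ (A : Set G)) ∩ (q +ᵥ (B : Set G)) = c +ᵥ (Λ : Set G) ↔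
      c ∈ (p +ᵥ (A : Set G)) ∩ (q +ᵥ (B : Set G)) ∧ Λ = A ⊓ B := by
  constructor
  · intro h
    have hc : c ∈ (p +ᵥ (A : Set G)) ∩ (q +ᵥ (B : Set G)) := h ▸ ⟨0, Λ.zero_mem, add_zero c⟩
    refine ⟨hc, SetLike.ext fun y => ?_⟩
    rw [← SetLike.mem_coe, ← SetLike.mem_coe, ← Set.vadd_mem_vadd_set_iff (a := c), ← h,
      vadd_inter_vadd_eq_of_mem hc, Set.vadd_mem_vadd_set_iff]
  · rintro ⟨hc, rfl⟩
    exact vadd_inter_vadd_eq_of_mem hc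

lemma nonempty_vadd_inter_vadd_iff :
    ((p +ᵥ (A : Set G)) ∩ (q +ᵥ (B : Set G))).Nonempty ↔ p - q ∈ A ⊔ B := by
  simp only [Set.Nonempty, Set.mem_inter_iff, AddSubgroup.mem_sup, mem_leftAddCoset_iff,
    SetLike.mem_coe]
  constructor
  · rintro ⟨c, ha, hb⟩
    exact ⟨-(-p + c), neg_mem ha, -q + c, hb, by abel⟩
  · rintro ⟨a, ha, b, hb, hab⟩
    refine ⟨q + b, ?_, by simpa using hb⟩
    convert neg_mem ha using 1
    rw [← sub_eq_iff_eq_add.2 hab.symm]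
    abel

end Cosets

lemma mul_conj_eq_one {u : ℂ} (hu : ‖u‖ = 1) : u * conj u = 1 := by
  rw [Complex.mul_conj', hu, Complex.ofReal_one, one_pow]

def rot (u : ℂ) : ℂ → ℂ := fun w => u * w

def reflect (u : ℂ) : ℂ → ℂ := fun w => u * conj w

lemma rot_comp_rot (u v : ℂ) : rot u ∘ rot v = rot (u * v) :=
  funext fun w => (mul_assoc u v w).symm

lemma rot_comp_reflect (u t : ℂ) : rot u ∘ reflect t = reflect (u * t) :=
  funext fun _ => (mul_assoc u t _).symm

lemma reflect_comp_rot (t v : ℂ) : reflect t ∘ rot v = rot (conj v) ∘ reflect t :=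
  funext fun w => by simp only [rot, reflect, Function.comp_apply, map_mul]; ring

lemma rot_one : rot 1 = id :=
  funext one_mul

lemma reflect_comp_reflect_self {t : ℂ} (ht : ‖t‖ = 1) : reflect t ∘ reflect t = id := by
  funext w
  simp only [reflect, Function.comp_apply, map_mul, Complex.conj_conj, id]
  rw [← mul_assoc, mul_conj_eq_one ht, one_mul]

lemma rot_comp_rot_conj {u : ℂ} (hu : ‖u‖ = 1) : rot u ∘ rot (conj u) = id := by
  rw [rot_comp_rot, mul_conj_eq_one hu, rot_one]

lemma rot_comp_reflect_comp_rot (u t v : ℂ) :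
    (rot u ∘ reflect t) ∘ rot v = rot (u * conj v) ∘ reflect t := by
  rw [Function.comp_assoc, reflect_comp_rot, ← Function.comp_assoc, rot_comp_rot]

lemma rot_comp_reflect_comp_rot_comp_reflect (u v : ℂ) {t : ℂ} (htn : ‖t‖ = 1) :
    (rot u ∘ reflect t) ∘ (rot v ∘ reflect t) = rot (u * conj v) := by
  rw [← Function.comp_assoc, rot_comp_reflect_comp_rot, Function.comp_assoc,
    reflect_comp_reflect_self htn, Function.comp_id]

lemma isLinIso_rot {u : ℂ} (hu : ‖u‖ = 1) : IsLinIso (rot u) :=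
  ⟨rotation ⟨u, mem_sphere_zero_iff_norm.2 hu⟩, funext fun w => rotation_apply _ w⟩

lemma isLinIso_reflect {u : ℂ} (hu : ‖u‖ = 1) : IsLinIso (reflect u) :=
  ⟨conjLIE.trans (rotation ⟨u, mem_sphere_zero_iff_norm.2 hu⟩), funext fun _ => rotation_apply _ _⟩

lemma IsLinIso.eq_rot_or_eq_reflect {f : ℂ → ℂ} (hf : IsLinIso f) :
    ∃ u : ℂ, ‖u‖ = 1 ∧ (f = rot u ∨ f = reflect u) := by
  obtain ⟨R, rfl⟩ := hf
  obtain ⟨a, rfl | rfl⟩ := linear_isometry_complex R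
  · exact ⟨a, Circle.norm_coe a, Or.inl (funext fun w => rotation_apply a w)⟩
  · exact ⟨a, Circle.norm_coe a, Or.inr (funext fun w => rotation_apply a _)⟩

lemma image_rot_Zi (u : ℂ) : rot u '' Zi = u • (Zi : Set ℂ) :=
  Set.image_smul (a := u)

lemma image_reflect_Zi (u : ℂ) : reflect u '' Zi = u • (Zi : Set ℂ) := by
  have hconj : conj '' (Zi : Set ℂ) = Zi :=
    Set.Subset.antisymm (Set.image_subset_iff.2 fun _ => conj_mem_Zi)
      fun a ha => ⟨conj a, conj_mem_Zi ha, Complex.conj_conj a⟩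
  calc reflect u '' Zi = (u • ·) '' (conj '' (Zi : Set ℂ)) := by rw [Set.image_image]; rfl
    _ = u • (Zi : Set ℂ) := by rw [hconj, Set.image_smul]

lemma image_shiftedZi {f : ℂ → ℂ} (hf : IsLinIso f) (x : ℂ) :
    f '' shiftedZi x = f x +ᵥ f '' Zi := by
  obtain ⟨R, rfl⟩ := hf
  exact Set.image_vadd_distrib R x _

lemma mem_OCs_iff {f : ℂ → ℂ} {u x : ℂ} (hf : IsLinIso f) (himg : f '' Zi = u • (Zi : Set ℂ)) :
    f ∈ OCs x ↔ (Zi ⊓ u • Zi).relIndex Zi ≠ 0 ∧ x - f x ∈ Zi ⊔ u • Zi := by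
  have himg' : f '' shiftedZi x = f x +ᵥ ((u • Zi : AddSubgroup ℂ) : Set ℂ) := by
    rw [image_shiftedZi hf, himg, AddSubgroup.coe_pointwise_smul]
  have hcoset : ∀ c (Λ : AddSubgroup ℂ), shiftedZi x ∩ f '' shiftedZi x = c +ᵥ (Λ : Set ℂ) ↔
      c ∈ shiftedZi x ∩ f '' shiftedZi x ∧ Λ = Zi ⊓ u • Zi := by
    intro c Λ
    rw [himg']
    exact vadd_inter_vadd_eq_vadd_iff
  have hne : (shiftedZi x ∩ f '' shiftedZi x).Nonempty ↔ x - f x ∈ Zi ⊔ u • Zi := by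
    rw [himg']
    exact nonempty_vadd_inter_vadd_iff
  rw [← hne]
  constructor
  · rintro ⟨-, c, -, Λ, -, hΛ, hc⟩
    obtain ⟨hc', rfl⟩ := (hcoset c Λ).1 hc
    exact ⟨hΛ, c, hc'⟩
  · rintro ⟨hΛ, c, hc⟩
    exact ⟨hf, c, hc.1, _, inf_le_left, hΛ, (hcoset c _).2 ⟨hc, rfl⟩⟩

def GaussianInt.addEquivIntProd : GaussianInt ≃+ ℤ × ℤ where
  toFun z := (z.re, z.im)
  invFun p := ⟨p.1, p.2⟩
  left_inv _ := rfl
  right_inv _ := rfl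
  map_add' _ _ := rfl

instance : Module.Free ℤ GaussianInt :=
  .of_equiv addEquivIntProd.toIntLinearEquiv.symm

instance : Module.Finite ℤ GaussianInt :=
  .equiv addEquivIntProd.toIntLinearEquiv.symm

def IsGaussianRational (u : ℂ) : Prop := ∃ z ∈ Zi, z ≠ 0 ∧ z * u ∈ Zi

lemma relIndex_inf_smul_ne_zero_iff {u : ℂ} (hu : u ≠ 0) :
    (Zi ⊓ u • Zi).relIndex Zi ≠ 0 ↔ IsGaussianRational u := by
  constructor
  · intro h
    obtain ⟨hnZ, hnu⟩ :=
      AddSubgroup.mem_inf.1 (AddSubgroup.nsmul_relIndex_mem (Zi ⊓ u • Zi) one_mem_Zi)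
    obtain ⟨b, hb, hbn⟩ := (AddSubgroup.mem_smul_pointwise_iff_exists _ _ _).1 hnu
    refine ⟨b, hb, ?_, ?_⟩
    · rintro rfl
      exact h (by simpa [eq_comm] using hbn)
    · rwa [mul_comm, ← smul_eq_mul, hbn]
  · rintro ⟨z, hz, hz0, ⟨w, hw⟩⟩
    have hw0 : w ≠ 0 := by
      rintro rfl
      exact mul_ne_zero hz0 hu (by simpa using hw.symm)
    have hle : (Ideal.span {w}).toAddSubgroup ≤ (Zi ⊓ u • Zi).comap toComplex.toAddMonoidHom := by
      intro y hy
      obtain ⟨a, rfl⟩ := Ideal.mem_span_singleton'.1 hy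
      refine ⟨⟨a * w, rfl⟩, (AddSubgroup.mem_smul_pointwise_iff_exists _ _ _).2
        ⟨toComplex a * z, mul_mem_Zi ⟨a, rfl⟩ hz, ?_⟩⟩
      change u * (toComplex a * z) = toComplex (a * w)
      rw [toComplex_mul, show toComplex w = z * u from hw]
      ring
    have : Finite (GaussianInt ⧸ (Ideal.span {w}).toAddSubgroup) :=
      Ideal.finiteQuotientOfFreeOfNeBot (Ideal.span {w}) (by simpa using hw0)
    have hindex : ((Zi ⊓ u • Zi).comap toComplex.toAddMonoidHom).index =
        (Zi ⊓ u • Zi).relIndex Zi :=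
      AddSubgroup.index_comap _ _
    rw [← hindex]
    exact ne_zero_of_dvd_ne_zero AddSubgroup.index_ne_zero_of_finite
      (AddSubgroup.index_dvd_of_le hle)

lemma isGaussianRational_of_mem_Zi {a : ℂ} (ha : a ∈ Zi) : IsGaussianRational a :=
  ⟨1, one_mem_Zi, one_ne_zero, by rwa [one_mul]⟩

lemma IsGaussianRational.mul {u v : ℂ} (hu : IsGaussianRational u) (hv : IsGaussianRational v) :
    IsGaussianRational (u * v) := by
  obtain ⟨z, hz, hz0, hzu⟩ := hu
  obtain ⟨z', hz', hz0', hzv⟩ := hv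
  refine ⟨z * z', mul_mem_Zi hz hz', mul_ne_zero hz0 hz0', ?_⟩
  convert mul_mem_Zi hzu hzv using 1
  ring

lemma IsGaussianRational.conj {u : ℂ} (hu : IsGaussianRational u) :
    IsGaussianRational (conj u) := by
  obtain ⟨z, hz, hz0, hzu⟩ := hu
  refine ⟨conj z, conj_mem_Zi hz, by simpa using hz0, ?_⟩
  simpa using conj_mem_Zi hzu

lemma IsGaussianRational.exists_coprime {u : ℂ} (hu : IsGaussianRational u) :
    ∃ z ∈ Zi, ∃ w ∈ Zi, z * u = w ∧ ∃ a ∈ Zi, ∃ b ∈ Zi, a * z + b * w = 1 := by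
  classical
  obtain ⟨_, ⟨z, rfl⟩, hz0, ⟨w, hw⟩⟩ := hu
  change toComplex z ≠ 0 at hz0
  change toComplex w = toComplex z * u at hw
  set g := EuclideanDomain.gcd z w
  set a := EuclideanDomain.gcdA z w
  set b := EuclideanDomain.gcdB z w
  obtain ⟨z', hz'⟩ : g ∣ z := EuclideanDomain.gcd_dvd_left z w
  obtain ⟨w', hw'⟩ : g ∣ w := EuclideanDomain.gcd_dvd_right z w
  have hg : g ≠ 0 := fun hg => hz0 (by simp [(EuclideanDomain.gcd_eq_zero_iff.1 hg).1])
  have hbezout : a * z' + b * w' = 1 := by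
    apply mul_left_cancel₀ hg
    linear_combination -a * hz' - b * hw' - EuclideanDomain.gcd_eq_gcd_ab z w
  refine ⟨toComplex z', ⟨z', rfl⟩, toComplex w', ⟨w', rfl⟩, ?_,
    toComplex a, ⟨a, rfl⟩, toComplex b, ⟨b, rfl⟩, ?_⟩
  · apply mul_left_cancel₀ (toComplex_eq_zero.not.2 hg)
    rw [← mul_assoc, ← toComplex_mul, ← hz', ← hw, ← toComplex_mul, ← hw']
  · rw [← toComplex_mul, ← toComplex_mul, ← toComplex_add, hbezout, toComplex_one]

lemma mem_sup_smul_iff {u y : ℂ} : y ∈ Zi ⊔ u • Zi ↔ ∃ p ∈ Zi, ∃ q ∈ Zi, p + u * q = y := by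
  simp only [AddSubgroup.mem_sup, AddSubgroup.mem_smul_pointwise_iff_exists, smul_eq_mul,
    exists_exists_and_eq_and]

lemma add_mul_mem_sup {u p q : ℂ} (hp : p ∈ Zi) (hq : q ∈ Zi) : p + u * q ∈ Zi ⊔ u • Zi :=
  mem_sup_smul_iff.2 ⟨p, hp, q, hq, rfl⟩

lemma mul_mem_sup {u c y : ℂ} (hc : c ∈ Zi) (hy : y ∈ Zi ⊔ u • Zi) : c * y ∈ Zi ⊔ u • Zi := by
  obtain ⟨p, hp, q, hq, rfl⟩ := mem_sup_smul_iff.1 hy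
  convert add_mul_mem_sup (u := u) (mul_mem_Zi hc hp) (mul_mem_Zi hc hq) using 1
  ring

lemma mul_mem_Zi_of_mem_sup {u z y : ℂ} (hz : z ∈ Zi) (hzu : z * u ∈ Zi)
    (hy : y ∈ Zi ⊔ u • Zi) : z * y ∈ Zi := by
  obtain ⟨p, hp, q, hq, rfl⟩ := mem_sup_smul_iff.1 hy
  convert add_mem (mul_mem_Zi hz hp) (mul_mem_Zi hzu hq) using 1
  ring

lemma mem_sup_of_mul_mem {u a b z w y : ℂ} (ha : a ∈ Zi) (hb : b ∈ Zi) (hab : a * z + b * w = 1)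
    (hz : z * y ∈ Zi ⊔ u • Zi) (hw : w * y ∈ Zi ⊔ u • Zi) : y ∈ Zi ⊔ u • Zi := by
  convert add_mem (mul_mem_sup ha hz) (mul_mem_sup hb hw) using 1
  linear_combination -y * hab

lemma mul_one_sub_mul_mem_sup {x u v : ℂ} (hu : IsGaussianRational u) (hv : IsGaussianRational v)
    (hxu : x * (1 - u) ∈ Zi ⊔ u • Zi) (hxv : x * (1 - v) ∈ Zi ⊔ v • Zi) :
    x * (1 - u * v) ∈ Zi ⊔ (u * v) • Zi := by
  obtain ⟨z₁, hz₁, w₁, hw₁, h₁, a₁, ha₁, b₁, hb₁, e₁⟩ := hu.exists_coprime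
  obtain ⟨z₂, hz₂, w₂, hw₂, h₂, a₂, ha₂, b₂, hb₂, e₂⟩ := hv.exists_coprime
  have hP : x * (z₁ - w₁) ∈ Zi := by
    convert mul_mem_Zi_of_mem_sup hz₁ (h₁ ▸ hw₁) hxu using 1
    linear_combination x * h₁
  have hQ : x * (z₂ - w₂) ∈ Zi := by
    convert mul_mem_Zi_of_mem_sup hz₂ (h₂ ▸ hw₂) hxv using 1
    linear_combination x * h₂
  have hzz : z₁ * (z₂ * (x * (1 - u * v))) ∈ Zi ⊔ (u * v) • Zi := by
    convert add_mul_mem_sup (u := u * v) (add_mem (mul_mem_Zi hz₂ hP) (mul_mem_Zi hw₁ hQ))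
      (zero_mem _) using 1
    linear_combination (-x * z₂ * v) * h₁ - x * w₁ * h₂
  have hwz : w₁ * (z₂ * (x * (1 - u * v))) ∈ Zi ⊔ (u * v) • Zi := by
    convert add_mul_mem_sup (u := u * v) (mul_mem_Zi hw₁ hQ) (mul_mem_Zi hz₂ hP) using 1
    linear_combination (-x * w₂) * h₁ - z₁ * u * x * h₂
  have hzw : z₁ * (w₂ * (x * (1 - u * v))) ∈ Zi ⊔ (u * v) • Zi := by
    convert add_mul_mem_sup (u := u * v) (mul_mem_Zi hw₂ hP) (mul_mem_Zi hz₁ hQ) using 1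
    linear_combination (-z₂ * v * x) * h₁ - x * w₁ * h₂
  have hww : w₁ * (w₂ * (x * (1 - u * v))) ∈ Zi ⊔ (u * v) • Zi := by
    convert add_mul_mem_sup (u := u * v) (zero_mem _)
      (add_mem (mul_mem_Zi hz₂ hP) (mul_mem_Zi hw₁ hQ)) using 1
    linear_combination (-x * z₂ * v) * h₁ - x * w₁ * h₂
  exact mem_sup_of_mul_mem ha₂ hb₂ e₂ (mem_sup_of_mul_mem ha₁ hb₁ e₁ hzz hwz)
    (mem_sup_of_mul_mem ha₁ hb₁ e₁ hzw hww)

def rotCoincidences (x : ℂ) : Submonoid ℂ where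
  carrier := {u | ‖u‖ = 1 ∧ IsGaussianRational u ∧ x * (1 - u) ∈ Zi ⊔ u • Zi}
  mul_mem' := fun ⟨hu, hqu, hxu⟩ ⟨hv, hqv, hxv⟩ =>
    ⟨by rw [norm_mul, hu, hv, one_mul], hqu.mul hqv, mul_one_sub_mul_mem_sup hqu hqv hxu hxv⟩
  one_mem' := ⟨norm_one, isGaussianRational_of_mem_Zi one_mem_Zi, by simp⟩

lemma conj_mem_rotCoincidences {x u : ℂ} (hu : u ∈ rotCoincidences x) :
    conj u ∈ rotCoincidences x := by
  obtain ⟨hu1, hqu, hxu⟩ := hu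
  have huu : conj u * u = 1 := by rw [mul_comm, mul_conj_eq_one hu1]
  refine ⟨by rwa [Complex.norm_conj], hqu.conj, ?_⟩
  obtain ⟨p, hp, q, hq, hpq⟩ := mem_sup_smul_iff.1 hxu
  refine mem_sup_smul_iff.2 ⟨-q, neg_mem hq, -p, neg_mem hp, ?_⟩
  linear_combination -conj u * hpq + (x + q) * huu

lemma rot_mem_OCs_iff {x u : ℂ} (hu : ‖u‖ = 1) : rot u ∈ OCs x ↔ u ∈ rotCoincidences x := by
  rw [mem_OCs_iff (isLinIso_rot hu) (image_rot_Zi u),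
    relIndex_inf_smul_ne_zero_iff (ne_zero_of_norm_ne_zero (hu ▸ one_ne_zero))]
  change _ ↔ ‖u‖ = 1 ∧ _ ∧ _
  simp only [hu, true_and, rot, mul_one_sub, mul_comm x u]

lemma reflect_mem_OCs_iff {x u : ℂ} (hu : ‖u‖ = 1) :
    reflect u ∈ OCs x ↔ IsGaussianRational u ∧ x - u * conj x ∈ Zi ⊔ u • Zi := by
  rw [mem_OCs_iff (isLinIso_reflect hu) (image_reflect_Zi u),
    relIndex_inf_smul_ne_zero_iff (ne_zero_of_norm_ne_zero (hu ▸ one_ne_zero))]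
  rfl

lemma OCs_subset_OCs_zero (x : ℂ) : OCs x ⊆ OCs 0 := by
  intro f hf
  obtain ⟨u, hu, rfl | rfl⟩ := hf.1.eq_rot_or_eq_reflect
  · rw [rot_mem_OCs_iff hu] at hf ⊢
    exact ⟨hu, hf.2.1, by simp⟩
  · rw [reflect_mem_OCs_iff hu] at hf ⊢
    exact ⟨hf.1, by simp⟩

lemma smul_Zi_eq_of_mem {t : ℂ} (ht : t ∈ Zi) (htn : ‖t‖ = 1) : t • Zi = Zi := by
  apply le_antisymm
  · intro y hy
    obtain ⟨s, hs, rfl⟩ := (AddSubgroup.mem_smul_pointwise_iff_exists _ _ _).1 hy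
    exact mul_mem_Zi ht hs
  · intro y hy
    refine (AddSubgroup.mem_smul_pointwise_iff_exists _ _ _).2
      ⟨conj t * y, mul_mem_Zi (conj_mem_Zi ht) hy, ?_⟩
    rw [smul_eq_mul, ← mul_assoc, mul_conj_eq_one htn, one_mul]

lemma rot_comp_reflect_mem_OCs_iff {x t u : ℂ} (ht : t ∈ Zi) (htn : ‖t‖ = 1)
    (hT : reflect t ∈ OCs x) (hu : ‖u‖ = 1) :
    rot u ∘ reflect t ∈ OCs x ↔ u ∈ rotCoincidences x := by
  have htZ : t • Zi = Zi := smul_Zi_eq_of_mem ht htn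
  have hxt : x - t * conj x ∈ Zi := by
    simpa [htZ] using ((reflect_mem_OCs_iff htn).1 hT).2
  have hq : IsGaussianRational (u * t) ↔ IsGaussianRational u := by
    refine ⟨fun h => ?_, fun h => h.mul (isGaussianRational_of_mem_Zi ht)⟩
    convert h.mul (isGaussianRational_of_mem_Zi (conj_mem_Zi ht)) using 1
    rw [mul_assoc, mul_conj_eq_one htn, mul_one]
  have hmem : u * (x - t * conj x) ∈ Zi ⊔ u • Zi := by
    simpa using add_mul_mem_sup (u := u) (zero_mem Zi) hxt
  have hshift : x - u * t * conj x = x * (1 - u) + u * (x - t * conj x) := by ring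
  rw [rot_comp_reflect, reflect_mem_OCs_iff (by rw [norm_mul, hu, htn, one_mul]), mul_smul, htZ,
    hshift, AddSubgroup.add_mem_cancel_right _ hmem, hq]
  exact ⟨fun h => ⟨hu, h⟩, fun h => h.2⟩

section ReflectionInOCs

variable {x t : ℂ} {f g : ℂ → ℂ}

lemma mem_OCs_iff_of_reflect_mem (ht : t ∈ Zi) (htn : ‖t‖ = 1) (hT : reflect t ∈ OCs x) :
    f ∈ OCs x ↔ ∃ u ∈ rotCoincidences x, f = rot u ∨ f = rot u ∘ reflect t := by
  constructor
  · intro hf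
    obtain ⟨u, hu, rfl | rfl⟩ := hf.1.eq_rot_or_eq_reflect
    · exact ⟨u, (rot_mem_OCs_iff hu).1 hf, Or.inl rfl⟩
    · have hut : reflect u = rot (u * conj t) ∘ reflect t := by
        rw [rot_comp_reflect, mul_assoc, mul_comm (conj t), mul_conj_eq_one htn, mul_one]
      have hn : ‖u * conj t‖ = 1 := by rw [norm_mul, Complex.norm_conj, hu, htn, one_mul]
      rw [hut] at hf ⊢
      exact ⟨_, (rot_comp_reflect_mem_OCs_iff ht htn hT hn).1 hf, Or.inr rfl⟩
  · rintro ⟨u, hu, rfl | rfl⟩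
    · exact (rot_mem_OCs_iff hu.1).2 hu
    · exact (rot_comp_reflect_mem_OCs_iff ht htn hT hu.1).2 hu

lemma comp_mem_OCs (ht : t ∈ Zi) (htn : ‖t‖ = 1) (hT : reflect t ∈ OCs x)
    (hf : f ∈ OCs x) (hg : g ∈ OCs x) : f ∘ g ∈ OCs x := by
  rw [mem_OCs_iff_of_reflect_mem ht htn hT] at hf hg ⊢
  obtain ⟨u, hu, rfl | rfl⟩ := hf <;> obtain ⟨v, hv, rfl | rfl⟩ := hg
  · exact ⟨u * v, mul_mem hu hv, Or.inl (rot_comp_rot u v)⟩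
  · exact ⟨u * v, mul_mem hu hv, Or.inr (by rw [← Function.comp_assoc, rot_comp_rot])⟩
  · exact ⟨u * conj v, mul_mem hu (conj_mem_rotCoincidences hv),
      Or.inr (rot_comp_reflect_comp_rot u t v)⟩
  · exact ⟨u * conj v, mul_mem hu (conj_mem_rotCoincidences hv),
      Or.inl (rot_comp_reflect_comp_rot_comp_reflect u v htn)⟩

lemma exists_comp_eq_id_of_mem_OCs (ht : t ∈ Zi) (htn : ‖t‖ = 1) (hT : reflect t ∈ OCs x)
    (hf : f ∈ OCs x) : ∃ h ∈ OCs x, f ∘ h = id := by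
  obtain ⟨u, hu, rfl | rfl⟩ := (mem_OCs_iff_of_reflect_mem ht htn hT).1 hf
  · exact ⟨rot (conj u), (rot_mem_OCs_iff (by rw [Complex.norm_conj, hu.1])).2
      (conj_mem_rotCoincidences hu), rot_comp_rot_conj hu.1⟩
  · refine ⟨_, hf, ?_⟩
    rw [rot_comp_reflect_comp_rot_comp_reflect u u htn, ← rot_comp_rot, rot_comp_rot_conj hu.1]

lemma mem_SOCs_iff : f ∈ SOCs x ↔ ∃ u ∈ rotCoincidences x, f = rot u := by
  constructor
  · rintro ⟨hf, u, hu, hfu⟩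
    obtain rfl : f = rot u := funext hfu
    exact ⟨u, (rot_mem_OCs_iff hu).1 hf, rfl⟩
  · rintro ⟨u, hu, rfl⟩
    exact ⟨(rot_mem_OCs_iff hu.1).2 hu, u, hu.1, fun _ => rfl⟩

lemma OCs_eq_SOCs_union (ht : t ∈ Zi) (htn : ‖t‖ = 1) (hT : reflect t ∈ OCs x) :
    OCs x = SOCs x ∪ (fun S => S ∘ reflect t) '' SOCs x := by
  ext f
  simp only [Set.mem_union, Set.mem_image, mem_SOCs_iff, mem_OCs_iff_of_reflect_mem ht htn hT]
  constructor
  · rintro ⟨u, hu, rfl | rfl⟩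
    · exact Or.inl ⟨u, hu, rfl⟩
    · exact Or.inr ⟨_, ⟨u, hu, rfl⟩, rfl⟩
  · rintro (⟨u, hu, rfl⟩ | ⟨_, ⟨u, hu, rfl⟩, rfl⟩)
    · exact ⟨u, hu, Or.inl rfl⟩
    · exact ⟨u, hu, Or.inr rfl⟩

end ReflectionInOCs

theorem OC_shifted_subgroup_of_point_group_reflection_general (x : ℂ) (k : ℕ)
    (hT : (fun w => I ^ k * conj w) ∈ OCs x) :
    (OCs x ⊆ OCs 0 ∧ id ∈ OCs x ∧ (∀ f ∈ OCs x, ∀ g ∈ OCs x, f ∘ g ∈ OCs x) ∧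
        (∀ f ∈ OCs x, ∀ g : ℂ → ℂ, g ∘ f = id → f ∘ g = id → g ∈ OCs x)) ∧
      OCs x = SOCs x ∪ (fun S => S ∘ (fun w => I ^ k * conj w)) '' SOCs x := by
  have ht : I ^ k ∈ Zi := I_pow_mem_Zi k
  have htn : ‖I ^ k‖ = 1 := by simp
  refine ⟨⟨OCs_subset_OCs_zero x, ?_, fun f hf g hg => comp_mem_OCs ht htn hT hf hg, ?_⟩,
    OCs_eq_SOCs_union ht htn hT⟩
  · exact (mem_OCs_iff_of_reflect_mem ht htn hT).2 ⟨1, one_mem _, Or.inl rot_one.symm⟩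
  · intro f hf g hgf _
    obtain ⟨h, hh, hfh⟩ := exists_comp_eq_id_of_mem_OCs ht htn hT hf
    have hgh : g = h := Function.LeftInverse.eq_rightInverse (f := f) (congrFun hgf) (congrFun hfh)
    exact hgh ▸ hh

theorem OC_shifted_subgroup_of_point_group_reflection (x : ℂ) (k : ℕ) (hk : k < 4)
    (hT : (fun w => I ^ k * conj w) ∈ OCs x) :
    (OCs x ⊆ OCs 0 ∧ id ∈ OCs x ∧ (∀ f ∈ OCs x, ∀ g ∈ OCs x, f ∘ g ∈ OCs x) ∧
        (∀ f ∈ OCs x, ∀ g : ℂ → ℂ, g ∘ f = id → f ∘ g = id → g ∈ OCs x)) ∧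
      OCs x = SOCs x ∪ (fun S => S ∘ (fun w => I ^ k * conj w)) '' SOCs x :=
  OC_shifted_subgroup_of_point_group_reflection_general x k hT
end

section
/- Let x = a + b·i ∈ ℂ with a irrational and b rational. If 2b ∈ ℤ, then OC(x+Γ) = {id, T_r}, where T_r is complex conjugation; otherwise OC(x+Γ) = {id}. -/
open Pointwise Complex ComplexConjugate

/-!
Write a coincidence isometry as `w ↦ u * w` or `w ↦ u * conj w`. The coincidence set `c + Λ`
contains `c` and `c + n`, `n` the index of `Λ`, both images of points of `x + Γ`; so `u` maps a
nonzero Gaussian integer to `n`, and `u ∈ ℚ(i)`. Some point `y ∈ x + Γ` is mapped into `x + Γ`: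
for a rotation this puts `(1 - u) x` in `ℚ(i)`, for a reflection it puts
`x - u x̄ = a (1 - u) + b i (1 + u)`, hence `a (1 - u)`, in `ℚ(i)`. As `a ∉ ℚ`, `u = 1`, and
complex conjugation maps a point of `x + Γ` into `x + Γ` iff `x - x̄ = 2 b i ∈ Γ`.
-/

lemma mem_Zi_iff {z : ℂ} : z ∈ Zi ↔ ∃ m n : ℤ, z = m + n * I := by
  constructor
  · rintro ⟨g, rfl⟩
    exact ⟨g.re, g.im, GaussianInt.toComplex_def g⟩
  · rintro ⟨m, n, rfl⟩
    exact ⟨⟨m, n⟩, GaussianInt.toComplex_def' m n⟩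

lemma conj_mem_Zi_s10 {z : ℂ} (hz : z ∈ Zi) : conj z ∈ Zi := by
  obtain ⟨m, n, rfl⟩ := mem_Zi_iff.mp hz
  exact mem_Zi_iff.mpr ⟨m, -n, by simp⟩

lemma sub_conj_mem_Zi_iff {x : ℂ} : x - conj x ∈ Zi ↔ ∃ n : ℤ, (n : ℝ) = 2 * x.im := by
  rw [Complex.sub_conj, mem_Zi_iff]
  constructor
  · rintro ⟨m, n, h⟩
    simp only [Complex.ext_iff] at h
    exact ⟨n, by simpa [eq_comm] using h.2⟩
  · rintro ⟨n, hn⟩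
    refine ⟨0, n, ?_⟩
    rw [show (n : ℂ) = ((2 * x.im : ℝ) : ℂ) by exact_mod_cast hn]
    push_cast; ring

lemma mem_shiftedZi_iff {x z : ℂ} : z ∈ shiftedZi x ↔ z - x ∈ Zi := by
  simp [shiftedZi, Set.mem_vadd_set_iff_neg_vadd_mem, sub_eq_neg_add]

lemma sub_mem_Zi_of_mem_shiftedZi {x y z : ℂ} (hy : y ∈ shiftedZi x) (hz : z ∈ shiftedZi x) :
    y - z ∈ Zi := by
  rw [mem_shiftedZi_iff] at hy hz
  simpa using Zi.sub_mem hy hz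

lemma sub_conj_mem_Zi_of_mem_shiftedZi {x y : ℂ} (hy : y ∈ shiftedZi x)
    (hcy : conj y ∈ shiftedZi x) : x - conj x ∈ Zi := by
  have h := Zi.sub_mem (conj_mem_Zi_s10 (mem_shiftedZi_iff.mp hy)) (mem_shiftedZi_iff.mp hcy)
  rwa [map_sub, sub_sub_sub_cancel_left] at h

lemma conj_image_shiftedZi {x : ℂ} (hx : x - conj x ∈ Zi) :
    (fun w => conj w) '' shiftedZi x = shiftedZi x := by
  have maps : ∀ y ∈ shiftedZi x, conj y ∈ shiftedZi x := fun y hy => by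
    have h := Zi.sub_mem (conj_mem_Zi_s10 (mem_shiftedZi_iff.mp hy)) hx
    rwa [map_sub, sub_sub_sub_cancel_right, ← mem_shiftedZi_iff] at h
  ext z
  exact ⟨by rintro ⟨y, hy, rfl⟩; exact maps y hy, fun hz => ⟨conj z, maps z hz, conj_conj z⟩⟩

lemma mem_OCs_of_image_eq {x : ℂ} (R : ℂ ≃ₗᵢ[ℝ] ℂ) (h : R '' shiftedZi x = shiftedZi x) :
    ⇑R ∈ OCs x :=
  ⟨⟨R, rfl⟩, x, mem_shiftedZi_iff.mpr (by simp), Zi, le_rfl,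
    by simp, by rw [h, Set.inter_self]; rfl⟩

lemma exists_apply_mem_shiftedZi_of_mem_OCs {x : ℂ} {f : ℂ → ℂ} (hf : f ∈ OCs x) :
    ∃ y ∈ shiftedZi x, f y ∈ shiftedZi x := by
  obtain ⟨-, c, -, Λ, -, -, hset⟩ := hf
  have hc : c ∈ shiftedZi x ∩ f '' shiftedZi x := hset ▸ ⟨0, Λ.zero_mem, add_zero c⟩
  obtain ⟨y, hy, rfl⟩ := hc.2
  exact ⟨y, hy, hc.1⟩

lemma exists_apply_eq_natCast_of_mem_OCs {x : ℂ} (R : ℂ ≃ₗᵢ[ℝ] ℂ) (hR : ⇑R ∈ OCs x) :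
    ∃ g ∈ Zi, ∃ n : ℕ, n ≠ 0 ∧ R g = n := by
  obtain ⟨-, c, -, Λ, -, hindex, hset⟩ := hR
  have one_mem_Zi : (1 : ℂ) ∈ Zi := mem_Zi_iff.mpr ⟨1, 0, by simp⟩
  obtain ⟨n, hn, -, hnΛ, -⟩ := AddSubgroup.exists_nsmul_mem_of_relIndex_ne_zero hindex one_mem_Zi
  have hmem : ∀ z ∈ Λ, c + z ∈ R '' shiftedZi x := fun z hz =>
    (hset ▸ ⟨z, hz, rfl⟩ : c + z ∈ shiftedZi x ∩ R '' shiftedZi x).2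
  obtain ⟨y₀, hy₀, h₀⟩ := hmem 0 Λ.zero_mem
  obtain ⟨y₁, hy₁, h₁⟩ := hmem n (by simpa using hnΛ)
  refine ⟨y₁ - y₀, sub_mem_Zi_of_mem_shiftedZi hy₁ hy₀, n, hn.ne', ?_⟩
  rw [map_sub, h₀, h₁]
  ring

/-- `complexSubfield ⊥` is `ℚ(i)`. -/
def complexSubfield (K : Subfield ℝ) : Subfield ℂ where
  carrier := {z | z.re ∈ K ∧ z.im ∈ K}
  zero_mem' := ⟨K.zero_mem, K.zero_mem⟩
  one_mem' := by simp [K.one_mem, K.zero_mem]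
  add_mem' hz hw := by simpa using ⟨K.add_mem hz.1 hw.1, K.add_mem hz.2 hw.2⟩
  neg_mem' hz := by simpa using hz
  mul_mem' hz hw := by
    simpa using ⟨K.sub_mem (K.mul_mem hz.1 hw.1) (K.mul_mem hz.2 hw.2),
      K.add_mem (K.mul_mem hz.1 hw.2) (K.mul_mem hz.2 hw.1)⟩
  inv_mem' z hz := by
    have hN : normSq z ∈ K := by
      rw [normSq_apply]; exact K.add_mem (K.mul_mem hz.1 hz.1) (K.mul_mem hz.2 hz.2)
    simpa [inv_re, inv_im, neg_div] using ⟨K.div_mem hz.1 hN, K.div_mem hz.2 hN⟩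

section complexSubfield

variable {K : Subfield ℝ}

lemma mem_complexSubfield {z : ℂ} : z ∈ complexSubfield K ↔ z.re ∈ K ∧ z.im ∈ K := Iff.rfl

lemma ofReal_mem_complexSubfield_iff {r : ℝ} : (r : ℂ) ∈ complexSubfield K ↔ r ∈ K := by
  simp [mem_complexSubfield, K.zero_mem]

lemma I_mem_complexSubfield : I ∈ complexSubfield K := by
  simp [mem_complexSubfield, K.zero_mem, K.one_mem]

lemma mem_complexSubfield_of_mem_Zi {z : ℂ} (hz : z ∈ Zi) : z ∈ complexSubfield K := by
  obtain ⟨m, n, rfl⟩ := mem_Zi_iff.mp hz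
  exact add_mem (ofReal_mem_complexSubfield_iff.mpr (intCast_mem K m))
    (mul_mem (ofReal_mem_complexSubfield_iff.mpr (intCast_mem K n)) I_mem_complexSubfield)

lemma mem_complexSubfield_of_mul_eq_natCast {u g : ℂ} (hg : g ∈ Zi) {n : ℕ} (hn : n ≠ 0)
    (h : u * g = n) : u ∈ complexSubfield K := by
  have hg0 : g ≠ 0 := by
    rintro rfl
    exact hn (by exact_mod_cast (mul_zero u ▸ h).symm)
  rw [eq_div_of_mul_eq hg0 h]
  exact div_mem (natCast_mem _ n) (mem_complexSubfield_of_mem_Zi hg)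

lemma eq_one_of_mul_mem_shiftedZi {x u y : ℂ} (hx : x ∉ complexSubfield K)
    (hu : u ∈ complexSubfield K) (hy : y ∈ shiftedZi x) (huy : u * y ∈ shiftedZi x) :
    u = 1 := by
  by_contra hu1
  have h : (1 - u) * x ∈ complexSubfield K := by
    rw [show (1 - u) * x = u * (y - x) - (u * y - x) by ring]
    exact sub_mem (mul_mem hu (mem_complexSubfield_of_mem_Zi (mem_shiftedZi_iff.mp hy)))
      (mem_complexSubfield_of_mem_Zi (mem_shiftedZi_iff.mp huy))
  have := div_mem h (sub_mem (one_mem _) hu)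
  rw [mul_div_cancel_left₀ x (sub_ne_zero.mpr (Ne.symm hu1))] at this
  exact hx this

lemma eq_one_of_mul_conj_mem_shiftedZi {x u y : ℂ} (hre : x.re ∉ K) (him : x.im ∈ K)
    (hu : u ∈ complexSubfield K) (hy : y ∈ shiftedZi x) (huy : u * conj y ∈ shiftedZi x) :
    u = 1 := by
  by_contra hu1
  have hx : x = x.re + x.im * I := (re_add_im x).symm
  have hcx : conj x = x.re - x.im * I := by apply Complex.ext <;> simp
  have h : (x.re : ℂ) * (1 - u) ∈ complexSubfield K := by
    rw [show (x.re : ℂ) * (1 - u) = u * conj (y - x) - (u * conj y - x) - x.im * I * (1 + u) by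
      rw [map_sub]; linear_combination u * hcx - hx]
    refine sub_mem (sub_mem ?_ ?_)
      (mul_mem (mul_mem ?_ I_mem_complexSubfield) (add_mem (one_mem _) hu))
    · exact mul_mem hu (mem_complexSubfield_of_mem_Zi (conj_mem_Zi_s10 (mem_shiftedZi_iff.mp hy)))
    · exact mem_complexSubfield_of_mem_Zi (mem_shiftedZi_iff.mp huy)
    · exact ofReal_mem_complexSubfield_iff.mpr him
  have := div_mem h (sub_mem (one_mem _) hu)
  rw [mul_div_cancel_right₀ _ (sub_ne_zero.mpr (Ne.symm hu1))] at this
  exact hre (ofReal_mem_complexSubfield_iff.mp this)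

theorem eq_id_or_eq_conj_of_mem_OCs {x : ℂ} (hre : x.re ∉ K) (him : x.im ∈ K) {f : ℂ → ℂ}
    (hf : f ∈ OCs x) : f = id ∨ (f = (fun w => conj w) ∧ x - conj x ∈ Zi) := by
  obtain ⟨R, rfl⟩ := hf.1
  obtain ⟨g, hg, n, hn, hRg⟩ := exists_apply_eq_natCast_of_mem_OCs R hf
  obtain ⟨y, hy, hRy⟩ := exists_apply_mem_shiftedZi_of_mem_OCs hf
  obtain ⟨u, rfl | rfl⟩ := linear_isometry_complex R
  · simp only [rotation_apply] at hRg hRy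
    have hu1 := eq_one_of_mul_mem_shiftedZi (fun h => hre h.1)
      (mem_complexSubfield_of_mul_eq_natCast hg hn hRg) hy hRy
    left
    funext w
    simp [hu1]
  · simp only [LinearIsometryEquiv.trans_apply, conjLIE_apply, rotation_apply] at hRg hRy
    have hu1 := eq_one_of_mul_conj_mem_shiftedZi hre him
      (mem_complexSubfield_of_mul_eq_natCast (conj_mem_Zi_s10 hg) hn hRg) hy hRy
    rw [hu1, one_mul] at hRy
    exact Or.inr ⟨funext fun w => by simp [hu1], sub_conj_mem_Zi_of_mem_shiftedZi hy hRy⟩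

theorem mem_OCs_iff_s10 {x : ℂ} (hre : x.re ∉ K) (him : x.im ∈ K) {f : ℂ → ℂ} :
    f ∈ OCs x ↔ f = id ∨ (f = (fun w => conj w) ∧ x - conj x ∈ Zi) := by
  refine ⟨eq_id_or_eq_conj_of_mem_OCs hre him, ?_⟩
  rintro (rfl | ⟨rfl, hx⟩)
  · exact mem_OCs_of_image_eq (LinearIsometryEquiv.refl ℝ ℂ) (Set.image_id _)
  · exact mem_OCs_of_image_eq conjLIE (conj_image_shiftedZi hx)

end complexSubfield

theorem OC_of_irrational_re_rational_im (a b : ℝ) (ha : Irrational a)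
    (hb : ∃ r : ℚ, (r : ℝ) = b) :
    ((∃ n : ℤ, (n : ℝ) = 2 * b) →
        OCs (a + b * I) = ({id, fun w => conj w} : Set (ℂ → ℂ))) ∧
      (¬(∃ n : ℤ, (n : ℝ) = 2 * b) → OCs (a + b * I) = ({id} : Set (ℂ → ℂ))) := by
  have hre : (a + b * I : ℂ).re ∉ (⊥ : Subfield ℝ) := by
    rw [Subfield.bot_eq_of_charZero]
    simpa [Irrational] using ha
  have him : (a + b * I : ℂ).im ∈ (⊥ : Subfield ℝ) := by
    obtain ⟨r, rfl⟩ := hb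
    simp
  constructor <;> intro h <;> ext f <;>
    simp only [mem_OCs_iff_s10 hre him, sub_conj_mem_Zi_iff] <;> simp [h]
end

section
/- Let x = a + b·i ∈ ℂ with a and b both irrational, and suppose a = p₁/q₁ + (p₂/q₂)·b, where p₁, p₂ ∈ ℤ, q₁, q₂ are positive integers, gcd(p₁,q₁) = gcd(p₂,q₂) = 1, and p₂·q₂ is even. If q₁ divides 2q₂, then OC(x+Γ) = {id, T}, where T is the reflection w ↦ ((p₂ + q₂·i)/(p₂ − q₂·i))·conj(w); otherwise OC(x+Γ) = {id}. -/
open Pointwise Complex ComplexConjugate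

/-!
Write `Γ = ℤ[i]`, `x = a + b i` and `z = p₂ + q₂ i`. If `R` is a coincidence isometry of
`x + Γ`, then some `y ∈ x + Γ` has `R y ∈ x + Γ`, and `R μ ∈ Γ` for some nonzero `μ ∈ Γ`
(the index of `Λ` in `Γ` lies in `Λ`). As `b` is irrational, `ν x ∈ Γ` with `ν ∈ Γ` forces
`ν = 0`. For a rotation `w ↦ u w` this gives `μ = u μ`, so `u = 1`. For a reflection
`w ↦ u w̄`, the relation `q₁ (z̄ x - z x̄) = -2 p₁ q₂ i ∈ Γ` lets one eliminate `x̄`, which forces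
`u = z / z̄`; then `y` shows `z̄ x - z x̄ ∈ Γ`, i.e. `q₁ ∣ 2 q₂`.

Conversely, if `gcd(p₂, q₂) = 1` and `p₂ q₂` is even, then `z` and `z̄` are coprime in `ℤ[i]`,
so `z̄ x - z x̄ ∈ Γ` can be written as `z γ₂ - z̄ γ₁`; the point `x + γ₁ = T (x + γ̄₂)` then lies
in both cosets, whose intersection is a coset of `Γ ∩ (z / z̄) Γ ⊇ |z|² Γ`.
-/

lemma mem_Zi_s13 {w : ℂ} : w ∈ Zi ↔ ∃ m n : ℤ, w = m + n * I := by
  constructor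
  · rintro ⟨g, rfl⟩
    exact ⟨g.re, g.im, by simp [GaussianInt.toComplex_def]⟩
  · rintro ⟨m, n, rfl⟩
    exact ⟨⟨m, n⟩, by simp [GaussianInt.toComplex_def']⟩

lemma intCast_add_intCast_mul_I_mem_Zi (m n : ℤ) : (m : ℂ) + n * I ∈ Zi := mem_Zi_s13.2 ⟨m, n, rfl⟩

lemma intCast_mem_Zi (m : ℤ) : (m : ℂ) ∈ Zi := by
  simpa using intCast_add_intCast_mul_I_mem_Zi m 0

lemma mul_mem_Zi_s13 {v w : ℂ} (hv : v ∈ Zi) (hw : w ∈ Zi) : v * w ∈ Zi := by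
  obtain ⟨g, rfl⟩ := hv
  obtain ⟨h, rfl⟩ := hw
  exact ⟨g * h, map_mul GaussianInt.toComplex g h⟩

lemma conj_mem_Zi_s13 {w : ℂ} (hw : w ∈ Zi) : conj w ∈ Zi := by
  obtain ⟨g, rfl⟩ := hw
  exact ⟨star g, GaussianInt.toComplex_star g⟩

lemma exists_intCast_eq_mul_conj {z : ℂ} (hz : z ∈ Zi) : ∃ N : ℤ, (N : ℂ) = z * conj z := by
  obtain ⟨g, rfl⟩ := hz
  refine ⟨g.norm, ?_⟩
  rw [← map_intCast GaussianInt.toComplex, Zsqrtd.norm_eq_mul_conj]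
  simp [GaussianInt.toComplex_star]

lemma mem_shiftedZi_s13 {x y : ℂ} : y ∈ shiftedZi x ↔ y - x ∈ Zi := by
  rw [shiftedZi, Set.mem_vadd_set_iff_neg_vadd_mem]
  simp [neg_add_eq_sub]

lemma eq_zero_of_mul_mem_Zi {x ν : ℂ} (hx : Irrational x.im) (hν : ν ∈ Zi) (h : ν * x ∈ Zi) :
    ν = 0 := by
  obtain ⟨m₁, m₂, rfl⟩ := mem_Zi_s13.1 hν
  obtain ⟨k₁, k₂, hk⟩ := mem_Zi_s13.1 h
  have hre := congrArg re hk
  have him := congrArg im hk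
  simp only [mul_re, mul_im, add_re, add_im, intCast_re, intCast_im, I_re, I_im] at hre him
  have hN : m₁ ^ 2 + m₂ ^ 2 = 0 := by
    by_contra hN
    refine (hx.intCast_mul hN).ne_int (m₁ * k₂ - m₂ * k₁) ?_
    push_cast
    linear_combination (m₁ : ℝ) * him - (m₂ : ℝ) * hre
  obtain ⟨rfl, rfl⟩ : m₁ = 0 ∧ m₂ = 0 := by constructor <;> nlinarith [sq_nonneg m₁, sq_nonneg m₂]
  simp

lemma exists_of_mem_OCs {x : ℂ} {R : ℂ ≃ₗᵢ[ℝ] ℂ} (hR : ⇑R ∈ OCs x) :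
    (∃ y ∈ shiftedZi x, R y ∈ shiftedZi x) ∧ ∃ μ ∈ Zi, μ ≠ 0 ∧ R μ ∈ Zi := by
  obtain ⟨-, c, -, Λ, hΛ, hindex, hset⟩ := hR
  have mem_inter : ∀ l ∈ Λ, c + l ∈ shiftedZi x ∩ R '' shiftedZi x := fun l hl ↦ by
    rw [hset]
    exact ⟨l, hl, rfl⟩
  obtain ⟨hc, y₀, hy₀, hRy₀⟩ := by simpa using mem_inter 0 Λ.zero_mem
  refine ⟨⟨y₀, hy₀, hRy₀ ▸ hc⟩, ?_⟩
  -- the index `n` of `Λ` in `Γ` is a nonzero element of `Λ`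
  set n := Λ.relIndex Zi
  have hn : (n : ℂ) ∈ Λ := by
    have h1 : (1 : ℂ) ∈ Zi := by simpa using intCast_mem_Zi 1
    simpa [AddSubgroup.mem_addSubgroupOf, n, AddSubgroup.relIndex] using
      AddSubgroup.nsmul_index_mem (Λ.addSubgroupOf Zi) ⟨1, h1⟩
  obtain ⟨-, y, hy, hRy⟩ := mem_inter n hn
  refine ⟨y - y₀, ?_, ?_, ?_⟩
  · simpa using sub_mem (mem_shiftedZi_s13.1 hy) (mem_shiftedZi_s13.1 hy₀)
  · rintro h
    simp [sub_eq_zero.1 h, hRy₀, hindex] at hRy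
  · rw [map_sub, hRy, hRy₀, add_sub_cancel_left]
    exact hΛ hn

lemma eq_one_of_mul_mem_shiftedZi_s13 {x u y μ : ℂ} (hx : Irrational x.im)
    (hy : y ∈ shiftedZi x) (huy : u * y ∈ shiftedZi x)
    (hμ : μ ∈ Zi) (hμ0 : μ ≠ 0) (huμ : u * μ ∈ Zi) : u = 1 := by
  rw [mem_shiftedZi_s13] at hy huy
  have h : (μ - u * μ) * x ∈ Zi := by
    have e : (μ - u * μ) * x = u * μ * (y - x) - μ * (u * y - x) := by ring
    rw [e]
    exact sub_mem (mul_mem_Zi_s13 huμ hy) (mul_mem_Zi_s13 hμ huy)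
  have h0 := eq_zero_of_mul_mem_Zi hx (sub_mem hμ huμ) h
  have : (1 - u) * μ = 0 := by linear_combination h0
  linear_combination -((mul_eq_zero.1 this).resolve_right hμ0)

lemma eq_div_conj_of_mul_conj_mem_shiftedZi {x z u y μ : ℂ} {k : ℤ} (hx : Irrational x.im)
    (hz : z ∈ Zi) (hz0 : z ≠ 0) (hk : k ≠ 0) (hkz : k * (conj z * x - z * conj x) ∈ Zi)
    (hy : y ∈ shiftedZi x) (huy : u * conj y ∈ shiftedZi x)
    (hμ : μ ∈ Zi) (hμ0 : μ ≠ 0) (huμ : u * conj μ ∈ Zi) : u = z / conj z := by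
  rw [mem_shiftedZi_s13] at hy huy
  have hμ' := conj_mem_Zi_s13 hμ
  have hzc := conj_mem_Zi_s13 hz
  have hlink : conj μ * x - u * conj μ * conj x ∈ Zi := by
    have e : conj μ * x - u * conj μ * conj x
        = u * conj μ * conj (y - x) - conj μ * (u * conj y - x) := by
      rw [map_sub]; ring
    rw [e]
    exact sub_mem (mul_mem_Zi_s13 huμ (conj_mem_Zi_s13 hy)) (mul_mem_Zi_s13 hμ' huy)
  have h : (k * (z * conj μ - u * conj μ * conj z)) * x ∈ Zi := by
    have e : (k * (z * conj μ - u * conj μ * conj z)) * x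
        = k * z * (conj μ * x - u * conj μ * conj x)
          - u * conj μ * (k * (conj z * x - z * conj x)) := by
      ring
    rw [e]
    exact sub_mem (mul_mem_Zi_s13 (mul_mem_Zi_s13 (intCast_mem_Zi k) hz) hlink) (mul_mem_Zi_s13 huμ hkz)
  have h0 := eq_zero_of_mul_mem_Zi hx
    (mul_mem_Zi_s13 (intCast_mem_Zi k) (sub_mem (mul_mem_Zi_s13 hz hμ') (mul_mem_Zi_s13 huμ hzc))) h
  have hk' : (k : ℂ) ≠ 0 := Int.cast_ne_zero.2 hk
  have hμc : conj μ ≠ 0 := (map_ne_zero _).2 hμ0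
  have hzc0 : conj z ≠ 0 := (map_ne_zero _).2 hz0
  rw [eq_div_iff hzc0]
  have : (k * conj μ) * (z - u * conj z) = 0 := by linear_combination h0
  linear_combination -((mul_eq_zero.1 this).resolve_left (mul_ne_zero hk' hμc))

lemma conj_mul_sub_mul_conj_mem_Zi {x z y : ℂ} (hz : z ∈ Zi) (hz0 : z ≠ 0)
    (hy : y ∈ shiftedZi x) (hTy : z / conj z * conj y ∈ shiftedZi x) :
    conj z * x - z * conj x ∈ Zi := by
  rw [mem_shiftedZi_s13] at hy hTy
  have hzc0 : conj z ≠ 0 := (map_ne_zero _).2 hz0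
  have e : conj z * x - z * conj x = z * conj (y - x) - conj z * (z / conj z * conj y - x) := by
    rw [map_sub]; field_simp; ring
  rw [e]
  exact sub_mem (mul_mem_Zi_s13 hz (conj_mem_Zi_s13 hy)) (mul_mem_Zi_s13 (conj_mem_Zi_s13 hz) hTy)

lemma mem_OCs_cases {x z : ℂ} {k : ℤ} (hx : Irrational x.im) (hz : z ∈ Zi) (hz0 : z ≠ 0)
    (hk : k ≠ 0) (hkz : k * (conj z * x - z * conj x) ∈ Zi) {f : ℂ → ℂ} (hf : f ∈ OCs x) :
    f = id ∨ f = (fun w ↦ z / conj z * conj w) ∧ conj z * x - z * conj x ∈ Zi := by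
  obtain ⟨R, rfl⟩ := hf.1
  obtain ⟨⟨y, hy, hRy⟩, μ, hμ, hμ0, hRμ⟩ := exists_of_mem_OCs hf
  obtain ⟨u, rfl | rfl⟩ := linear_isometry_complex R
  · left
    simp only [rotation_apply] at hRy hRμ
    have hu := eq_one_of_mul_mem_shiftedZi_s13 hx hy hRy hμ hμ0 hRμ
    funext w
    simp [hu]
  · right
    simp only [LinearIsometryEquiv.trans_apply, conjLIE_apply, rotation_apply] at hRy hRμ
    have hu := eq_div_conj_of_mul_conj_mem_shiftedZi hx hz hz0 hk hkz hy hRy hμ hμ0 hRμ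
    refine ⟨funext fun w ↦ by simp [hu], ?_⟩
    exact conj_mul_sub_mul_conj_mem_Zi hz hz0 hy (hu ▸ hRy)

lemma shiftedZi_inter_image_eq {x c : ℂ} (f : ℂ →+ ℂ) (hc : c ∈ shiftedZi x)
    (hfc : c ∈ f '' shiftedZi x) :
    shiftedZi x ∩ f '' shiftedZi x = c +ᵥ ((Zi ⊓ Zi.map f : AddSubgroup ℂ) : Set ℂ) := by
  obtain ⟨y₀, hy₀, rfl⟩ := hfc
  rw [mem_shiftedZi_s13] at hc hy₀
  ext w
  simp only [Set.mem_inter_iff, Set.mem_image, Set.mem_vadd_set, SetLike.mem_coe,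
    AddSubgroup.mem_inf, AddSubgroup.mem_map, mem_shiftedZi_s13, vadd_eq_add]
  constructor
  · rintro ⟨hw, y, hy, rfl⟩
    refine ⟨f y - f y₀, ⟨?_, y - y₀, ?_, map_sub f y y₀⟩, add_sub_cancel _ _⟩
    · simpa using sub_mem hw hc
    · simpa using sub_mem hy hy₀
  · rintro ⟨l, ⟨hl, γ, hγ, rfl⟩, rfl⟩
    refine ⟨by simpa [add_sub_right_comm] using add_mem hc hl, y₀ + γ, ?_, map_add f y₀ γ⟩
    simpa [add_sub_right_comm] using add_mem hy₀ hγ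

instance fg_Zi : AddGroup.FG Zi := by
  let f : ℤ × ℤ →+ Zi := AddMonoidHom.codRestrict
    ((Int.castAddHom ℂ).coprod ((AddMonoidHom.mulRight I).comp (Int.castAddHom ℂ))) Zi
    fun p ↦ intCast_add_intCast_mul_I_mem_Zi p.1 p.2
  refine AddGroup.fg_of_surjective (f := f) ?_
  rintro ⟨w, hw⟩
  obtain ⟨m, n, rfl⟩ := mem_Zi_s13.1 hw
  exact ⟨(m, n), rfl⟩

lemma relIndex_Zi_ne_zero_of_zsmul_mem {Λ : AddSubgroup ℂ} {N : ℤ} (hN : N ≠ 0)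
    (h : ∀ w ∈ Zi, N • w ∈ Λ) : Λ.relIndex Zi ≠ 0 := by
  have : IsAddTorsion (Zi ⧸ Λ.addSubgroupOf Zi) := fun q ↦
    QuotientAddGroup.induction_on q fun w ↦ isOfFinAddOrder_iff_zsmul_eq_zero.2
      ⟨N, hN, by
        rw [← QuotientAddGroup.mk_zsmul, QuotientAddGroup.eq_zero_iff,
          AddSubgroup.mem_addSubgroupOf]
        exact h w w.2⟩
  have : Finite (Zi ⧸ Λ.addSubgroupOf Zi) := AddCommGroup.finite_of_fg_isAddTorsion _ this
  exact AddSubgroup.index_ne_zero_of_finite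

lemma mem_OCs_of_mem_inter {x c : ℂ} (R : ℂ ≃ₗᵢ[ℝ] ℂ) (hc : c ∈ shiftedZi x)
    (hRc : c ∈ R '' shiftedZi x) (hindex : (Zi ⊓ Zi.map (R : ℂ →+ ℂ)).relIndex Zi ≠ 0) :
    ⇑R ∈ OCs x :=
  ⟨⟨R, rfl⟩, c, hc, _, inf_le_left, hindex, shiftedZi_inter_image_eq (R : ℂ →+ ℂ) hc hRc⟩

lemma id_mem_OCs (x : ℂ) : id ∈ OCs x := by
  have hx : x ∈ shiftedZi x := mem_shiftedZi_s13.2 (by simp)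
  refine mem_OCs_of_mem_inter (LinearIsometryEquiv.refl ℝ ℂ) hx ⟨x, hx, rfl⟩
    (relIndex_Zi_ne_zero_of_zsmul_mem one_ne_zero fun w hw ↦ ?_)
  simpa using hw

lemma reflection_mem_OCs {x z : ℂ} (hz : z ∈ Zi)
    (hcop : ∃ α ∈ Zi, ∃ β ∈ Zi, z * α + conj z * β = 1) (hv : conj z * x - z * conj x ∈ Zi) :
    (fun w ↦ z / conj z * conj w) ∈ OCs x := by
  obtain ⟨α, hα, β, hβ, hαβ⟩ := hcop
  have hz0 : z ≠ 0 := by rintro rfl; simp at hαβ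
  have hzc0 : conj z ≠ 0 := (map_ne_zero _).2 hz0
  set v := conj z * x - z * conj x with hvdef
  let R : ℂ ≃ₗᵢ[ℝ] ℂ := conjLIE.trans (rotation (Circle.ofConjDivSelf (conj z) hzc0))
  have hR : ∀ w, R w = z / conj z * conj w := fun w ↦ by simp [R]
  have hR' : ⇑R = fun w ↦ z / conj z * conj w := funext hR
  rw [← hR']
  -- `v = z (vα) + conj z (vβ)` produces a point `x - vβ = T (x + conj (vα))` in both cosets
  refine mem_OCs_of_mem_inter R (c := x - v * β) ?_ ⟨x + conj (v * α), ?_, ?_⟩ ?_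
  · exact mem_shiftedZi_s13.2 (by simpa using neg_mem (mul_mem_Zi_s13 hv hβ))
  · exact mem_shiftedZi_s13.2 (by simpa using conj_mem_Zi_s13 (mul_mem_Zi_s13 hv hα))
  · have key : z * (conj x + v * α) = (x - v * β) * conj z := by
      linear_combination v * hαβ - hvdef
    rw [hR, map_add, Complex.conj_conj, div_mul_eq_mul_div, key, mul_div_cancel_right₀ _ hzc0]
  · obtain ⟨N, hN⟩ := exists_intCast_eq_mul_conj hz
    have hN0 : N ≠ 0 := by
      rintro rfl
      simp [hz0, hzc0] at hN
    refine relIndex_Zi_ne_zero_of_zsmul_mem hN0 fun w hw ↦ ?_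
    refine ⟨by simpa using mul_mem_Zi_s13 (intCast_mem_Zi N) hw, conj (conj z * conj z * w),
      conj_mem_Zi_s13 (mul_mem_Zi_s13 (mul_mem_Zi_s13 (conj_mem_Zi_s13 hz) (conj_mem_Zi_s13 hz)) hw), ?_⟩
    simp only [AddMonoidHom.coe_coe, hR, Complex.conj_conj, zsmul_eq_mul, hN]
    field_simp

section Classification

variable {x z : ℂ} {k : ℤ}

lemma OCs_eq_pair (hx : Irrational x.im) (hz : z ∈ Zi)
    (hcop : ∃ α ∈ Zi, ∃ β ∈ Zi, z * α + conj z * β = 1) (hk : k ≠ 0)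
    (hkz : k * (conj z * x - z * conj x) ∈ Zi) (hv : conj z * x - z * conj x ∈ Zi) :
    OCs x = {id, fun w ↦ z / conj z * conj w} := by
  have hz0 : z ≠ 0 := by
    obtain ⟨α, -, β, -, h⟩ := hcop
    rintro rfl
    simp at h
  ext f
  refine ⟨fun hf ↦ ?_, ?_⟩
  · rcases mem_OCs_cases hx hz hz0 hk hkz hf with h | ⟨h, -⟩
    exacts [Or.inl h, Or.inr h]
  · rintro (rfl | rfl)
    exacts [id_mem_OCs x, reflection_mem_OCs hz hcop hv]

lemma OCs_eq_singleton (hx : Irrational x.im) (hz : z ∈ Zi) (hz0 : z ≠ 0) (hk : k ≠ 0)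
    (hkz : k * (conj z * x - z * conj x) ∈ Zi) (hv : conj z * x - z * conj x ∉ Zi) :
    OCs x = {id} := by
  ext f
  refine ⟨fun hf ↦ ?_, fun hf ↦ hf ▸ id_mem_OCs x⟩
  rcases mem_OCs_cases hx hz hz0 hk hkz hf with h | ⟨-, h⟩
  exacts [h, absurd h hv]

end Classification

lemma exists_mul_add_conj_mul_eq_one {p q : ℤ} (hpq : Int.gcd p q = 1) (heven : Even (p * q)) :
    ∃ α ∈ Zi, ∃ β ∈ Zi, (p + q * I) * α + conj ((p : ℂ) + q * I) * β = 1 := by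
  obtain ⟨s, t, hst⟩ := Int.isCoprime_iff_gcd_eq_one.2 hpq
  have hodd : Odd (p ^ 2 + q ^ 2) := by
    rcases Int.even_or_odd p with hp | hp <;> rcases Int.even_or_odd q with hq | hq
    · have h2 := Int.dvd_gcd hp.two_dvd hq.two_dvd
      rw [hpq] at h2
      norm_num at h2
    · exact (Int.even_pow.2 ⟨hp, two_ne_zero⟩).add_odd hq.pow
    · exact hp.pow.add_even (Int.even_pow.2 ⟨hq, two_ne_zero⟩)
    · exact absurd heven (Int.not_even_iff_odd.2 (hp.mul hq))
  obtain ⟨k, hk⟩ := hodd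
  -- the ideal `(z, conj z)` contains `2 = 2 (s p + t q)` and the odd number `z * conj z = 2k + 1`
  refine ⟨(p - k * s : ℤ) + (k * t - q : ℤ) * I, intCast_add_intCast_mul_I_mem_Zi _ _,
    (-(k * s) : ℤ) + (-(k * t) : ℤ) * I, intCast_add_intCast_mul_I_mem_Zi _ _, ?_⟩
  have hstC : (s : ℂ) * p + t * q = 1 := by exact_mod_cast hst
  have hkC : (p : ℂ) ^ 2 + q ^ 2 = 2 * k + 1 := by exact_mod_cast hk
  simp only [map_add, map_mul, map_intCast, conj_I]
  push_cast
  linear_combination (2 * (k : ℂ) * t * q - (q : ℂ) ^ 2) * I_sq - 2 * (k : ℂ) * hstC + hkC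

lemma intCast_div_mul_I_mem_Zi_iff {m q : ℤ} (hq : q ≠ 0) : (m : ℂ) / q * I ∈ Zi ↔ q ∣ m := by
  rw [mem_Zi_s13]
  constructor
  · rintro ⟨k, l, h⟩
    have him := congrArg im h
    simp only [mul_im, div_intCast_re, intCast_re, I_im, mul_one, div_intCast_im, intCast_im,
      zero_div, I_re, mul_zero, add_zero, add_im, zero_add] at him
    rw [div_eq_iff (by exact_mod_cast hq)] at him
    exact ⟨l, by exact_mod_cast him.trans (mul_comm _ _)⟩
  · rintro ⟨l, rfl⟩
    refine ⟨0, l, ?_⟩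
    push_cast
    field_simp
    ring

lemma conj_mul_sub_mul_conj_eq {a b : ℝ} {p₁ p₂ q₁ q₂ : ℤ} (hq₁ : q₁ ≠ 0) (hq₂ : q₂ ≠ 0)
    (hab : a = p₁ / q₁ + p₂ / q₂ * b) :
    conj ((p₂ : ℂ) + q₂ * I) * (a + b * I) - (p₂ + q₂ * I) * conj ((a : ℂ) + b * I)
      = ((-2 * p₁ * q₂ : ℤ) : ℂ) / q₁ * I := by
  subst hab
  simp only [map_add, map_mul, map_intCast, conj_I, conj_ofReal]
  push_cast
  field_simp
  ring

theorem OC_of_rationally_dependent_even_general (a b : ℝ) (hb : Irrational b)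
    (p₁ p₂ q₁ q₂ : ℤ) (hq₁ : 0 < q₁) (hq₂ : 0 < q₂)
    (hcop₁ : Int.gcd p₁ q₁ = 1) (hcop₂ : Int.gcd p₂ q₂ = 1)
    (heven : Even (p₂ * q₂))
    (hab : a = (p₁ : ℝ) / (q₁ : ℝ) + ((p₂ : ℝ) / (q₂ : ℝ)) * b) :
    (q₁ ∣ 2 * q₂ →
        OCs (a + b * I) =
          ({id, fun w => (((p₂ : ℂ) + (q₂ : ℂ) * I) / ((p₂ : ℂ) - (q₂ : ℂ) * I)) * conj w} :
            Set (ℂ → ℂ))) ∧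
      (¬ q₁ ∣ 2 * q₂ → OCs (a + b * I) = ({id} : Set (ℂ → ℂ))) := by
  set z : ℂ := p₂ + q₂ * I
  have hx : Irrational ((a : ℂ) + b * I).im := by simpa using hb
  have hz : z ∈ Zi := intCast_add_intCast_mul_I_mem_Zi p₂ q₂
  have hz0 : z ≠ 0 := fun h ↦ hq₂.ne' (by simpa [z] using congrArg im h)
  have hconj : conj z = p₂ - q₂ * I := by simp [z, sub_eq_add_neg]
  have hv := conj_mul_sub_mul_conj_eq hq₁.ne' hq₂.ne' hab
  have hkv : q₁ * (conj z * (a + b * I) - z * conj ((a : ℂ) + b * I)) ∈ Zi := by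
    rw [hv, ← mul_assoc, mul_div_cancel₀ _ (Int.cast_ne_zero.2 hq₁.ne')]
    simpa using intCast_add_intCast_mul_I_mem_Zi 0 (-2 * p₁ * q₂)
  have hv_mem : conj z * (a + b * I) - z * conj ((a : ℂ) + b * I) ∈ Zi ↔ q₁ ∣ 2 * q₂ := by
    have hcop : IsCoprime q₁ p₁ := (Int.isCoprime_iff_gcd_eq_one.2 hcop₁).symm
    rw [hv, intCast_div_mul_I_mem_Zi_iff hq₁.ne', show -2 * p₁ * q₂ = p₁ * -(2 * q₂) by ring]
    exact ⟨fun h ↦ dvd_neg.1 (hcop.dvd_of_dvd_mul_left h), fun h ↦ (dvd_neg.2 h).mul_left p₁⟩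
  rw [← hconj]
  exact ⟨fun h ↦ OCs_eq_pair hx hz (exists_mul_add_conj_mul_eq_one hcop₂ heven) hq₁.ne' hkv
    (hv_mem.2 h), fun h ↦ OCs_eq_singleton hx hz hz0 hq₁.ne' hkv (mt hv_mem.1 h)⟩

theorem OC_of_rationally_dependent_even (a b : ℝ) (ha : Irrational a) (hb : Irrational b)
    (p₁ p₂ q₁ q₂ : ℤ) (hq₁ : 0 < q₁) (hq₂ : 0 < q₂)
    (hcop₁ : Int.gcd p₁ q₁ = 1) (hcop₂ : Int.gcd p₂ q₂ = 1)
    (heven : Even (p₂ * q₂))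
    (hab : a = (p₁ : ℝ) / (q₁ : ℝ) + ((p₂ : ℝ) / (q₂ : ℝ)) * b) :
    (q₁ ∣ 2 * q₂ →
        OCs (a + b * I) =
          ({id, fun w => (((p₂ : ℂ) + (q₂ : ℂ) * I) / ((p₂ : ℂ) - (q₂ : ℂ) * I)) * conj w} :
            Set (ℂ → ℂ))) ∧
      (¬ q₁ ∣ 2 * q₂ → OCs (a + b * I) = ({id} : Set (ℂ → ℂ))) :=
  OC_of_rationally_dependent_even_general a b hb p₁ p₂ q₁ q₂ hq₁ hq₂ hcop₁ hcop₂ heven hab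
end
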